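/- arXiv:2210.13354 — 5 statements merged into one kernel-verified Lean document; each statement's English description precedes it below -/
import Mathlib

section
/- Lemma 1: Let π ∈ P_k for some k be a matching map that cannot be obtained as a restriction of π* to a subset of S*. Let S0 ⊆ S* be any set with |S0| ≤ |S_π| and {i ∈ S_π ∩ S* : π(i) = π*(i)} ⊆ S0, and let π0 be the restriction of π* to S0. Then, pointwise on the event Ω0 = {8ζ1 ≤ κ̄_all and 4√d·ζ2 ≤ κ̄_all²}, one has L(π) − L(π0) ≥ κ̄_all²/4 + d·(|S_π| − |S0|). -/
open MeasureTheory ProbabilityTheory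

set_option linter.unusedVariables false

theorem stmt_3
    {d n m kstar : ℕ}
    (hd : 1 ≤ d) (hn : 2 ≤ n) (hnm : n ≤ m)
    {Ω : Type*} [MeasurableSpace Ω] (P : Measure Ω) [IsProbabilityMeasure P]
    (θ : Fin n → EuclideanSpace ℝ (Fin d)) (θ' : Fin m → EuclideanSpace ℝ (Fin d))
    (σ σ' : ℝ) (hσ : 0 < σ) (hσ' : 0 < σ')
    (ξ : (Fin n ⊕ Fin m) × Fin d → Ω → ℝ)
    (hmeas : ∀ p, Measurable (ξ p))
    (hindep : iIndepFun ξ P)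
    (hgauss : ∀ p, P.map (ξ p) = gaussianReal 0 1)
    (Sstar : Finset (Fin n)) (hkstar : Sstar.card = kstar)
    (πstar : Fin n → Fin m) (hπstar : Set.InjOn πstar ↑Sstar)
    (hmatch : ∀ i ∈ Sstar, θ i = θ' (πstar i))
    (X : Fin n → Ω → EuclideanSpace ℝ (Fin d))
    (X' : Fin m → Ω → EuclideanSpace ℝ (Fin d))
    (hX : ∀ i ω t, X i ω t = θ i t + σ * ξ (Sum.inl i, t) ω)
    (hX' : ∀ j ω t, X' j ω t = θ' j t + σ' * ξ (Sum.inr j, t) ω)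
    (η : Fin n → Fin m → Ω → EuclideanSpace ℝ (Fin d))
    (hη : ∀ i j ω t, η i j ω t =
      (σ * ξ (Sum.inl i, t) ω - σ' * ξ (Sum.inr j, t) ω) / Real.sqrt (σ^2 + σ'^2))
    (κbar : ℝ)
    (hκbar : κbar = sInf {r : ℝ | ∃ i j, ¬(i ∈ Sstar ∧ j = πstar i) ∧
        r = ‖θ i - θ' j‖ / Real.sqrt (σ^2 + σ'^2)})
    (ζ1 ζ2 : Ω → ℝ)
    (hζ1 : ∀ ω, ζ1 ω = sSup {r : ℝ | ∃ i j, ¬(i ∈ Sstar ∧ j = πstar i) ∧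
        r = abs ((inner ℝ (θ i - θ' j) (η i j ω) : ℝ)) / ‖θ i - θ' j‖})
    (hζ2 : ∀ ω, ζ2 ω = (Real.sqrt d)⁻¹ * sSup {r : ℝ | ∃ i j, r = abs (‖η i j ω‖^2 - (d:ℝ))})
    (Φhat : ℕ → Ω → ℝ)
    (hΦhat : ∀ k ω, Φhat k ω = sInf {r : ℝ | ∃ (S : Finset (Fin n)) (π : Fin n → Fin m),
        S.card = k ∧ Set.InjOn π ↑S ∧ r = ∑ i ∈ S, ‖X i ω - X' (π i) ω‖^2})
    (Lhat : ℕ → Ω → ℝ)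
    (hLhat : ∀ k ω, Lhat k ω = sInf {r : ℝ | ∃ (S : Finset (Fin n)) (π : Fin n → Fin m),
        S.card = k ∧ Set.InjOn π ↑S ∧ r = (∑ i ∈ S, ‖X i ω - X' (π i) ω‖^2) / (σ^2 + σ'^2)})
    (ω : Ω)
    (hΩ0 : 8 * ζ1 ω ≤ κbar ∧ 4 * Real.sqrt d * ζ2 ω ≤ κbar^2)
    (S : Finset (Fin n)) (π : Fin n → Fin m) (hπinj : Set.InjOn π ↑S)
    (hnotrestr : ¬(S ⊆ Sstar ∧ ∀ i ∈ S, π i = πstar i))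
    (S0 : Finset (Fin n)) (hS0sub : S0 ⊆ Sstar) (hS0card : S0.card ≤ S.card)
    (hS0plus : ∀ i ∈ S, i ∈ Sstar → π i = πstar i → i ∈ S0) :
    (∑ i ∈ S, ‖X i ω - X' (π i) ω‖^2) / (σ^2 + σ'^2)
      - (∑ i ∈ S0, ‖X i ω - X' (πstar i) ω‖^2) / (σ^2 + σ'^2)
      ≥ κbar^2 / 4 + (d : ℝ) * ((S.card : ℝ) - (S0.card : ℝ)) := by
  classical
  obtain ⟨hz1, hz2⟩ := hΩ0
  set A : ℝ := σ^2 + σ'^2 with hA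
  have hApos : 0 < A := by positivity
  set σ0 : ℝ := Real.sqrt A with hσ0
  have hσ0pos : 0 < σ0 := Real.sqrt_pos.2 hApos
  have hσ0sq : σ0^2 = A := Real.sq_sqrt hApos.le
  have hdpos : (0:ℝ) < Real.sqrt d := Real.sqrt_pos.2 (by exact_mod_cast hd)
  clear_value σ0
  clear_value A
  -- vector identity
  have hvec : ∀ i j, X i ω - X' j ω = (θ i - θ' j) + σ0 • η i j ω := by
    intro i j
    ext t
    simp only [PiLp.sub_apply, PiLp.add_apply, PiLp.smul_apply, smul_eq_mul, hX, hX', hη]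
    rw [mul_div_cancel₀ _ (ne_of_gt hσ0pos)]
    ring
  have hnormsq : ∀ i j, ‖X i ω - X' j ω‖^2
      = ‖θ i - θ' j‖^2 + 2*σ0*(inner ℝ (θ i - θ' j) (η i j ω) : ℝ) + A*‖η i j ω‖^2 := by
    intro i j
    rw [hvec i j, norm_add_sq_real, real_inner_smul_right, norm_smul, Real.norm_eq_abs,
      abs_of_pos hσ0pos, mul_pow, hσ0sq]
    ring
  -- a bad pair exists
  have hbadex : ∃ i ∈ S, ¬(i ∈ Sstar ∧ π i = πstar i) := by
    by_contra h
    push_neg at h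
    exact hnotrestr ⟨fun i hi => (h i hi).1, fun i hi => (h i hi).2⟩
  obtain ⟨i0, hi0S, hi0bad⟩ := hbadex
  -- κbar facts
  have hKbdd : BddBelow {r : ℝ | ∃ i j, ¬(i ∈ Sstar ∧ j = πstar i) ∧
      r = ‖θ i - θ' j‖ / σ0} := by
    refine ⟨0, fun r hr => ?_⟩
    obtain ⟨i, j, _, rfl⟩ := hr
    exact div_nonneg (norm_nonneg _) hσ0pos.le
  have hKne : Set.Nonempty {r : ℝ | ∃ i j, ¬(i ∈ Sstar ∧ j = πstar i) ∧
      r = ‖θ i - θ' j‖ / σ0} :=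
    ⟨_, i0, π i0, hi0bad, rfl⟩
  have hκnonneg : 0 ≤ κbar := by
    rw [hκbar]
    refine le_csInf hKne fun r hr => ?_
    obtain ⟨i, j, _, rfl⟩ := hr
    exact div_nonneg (norm_nonneg _) hσ0pos.le
  have hκle : ∀ i j, ¬(i ∈ Sstar ∧ j = πstar i) → κbar ≤ ‖θ i - θ' j‖ / σ0 := by
    intro i j hij
    rw [hκbar]
    exact csInf_le hKbdd ⟨i, j, hij, rfl⟩
  -- ζ1 facts
  have hZ1bdd : BddAbove {r : ℝ | ∃ i j, ¬(i ∈ Sstar ∧ j = πstar i) ∧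
      r = abs ((inner ℝ (θ i - θ' j) (η i j ω) : ℝ)) / ‖θ i - θ' j‖} := by
    refine BddAbove.mono (t := Set.range (fun p : Fin n × Fin m =>
      abs ((inner ℝ (θ p.1 - θ' p.2) (η p.1 p.2 ω) : ℝ)) / ‖θ p.1 - θ' p.2‖)) ?_
      ((Set.finite_range _).bddAbove)
    rintro r ⟨i, j, _, rfl⟩
    exact ⟨(i, j), rfl⟩
  have hζ1nonneg : 0 ≤ ζ1 ω := by
    rw [hζ1]
    refine le_trans (by positivity) (le_csSup hZ1bdd ⟨i0, π i0, hi0bad, rfl⟩)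
  have hζ1bd : ∀ i j, ¬(i ∈ Sstar ∧ j = πstar i) →
      |(inner ℝ (θ i - θ' j) (η i j ω) : ℝ)| ≤ ‖θ i - θ' j‖ * ζ1 ω := by
    intro i j hij
    rcases eq_or_ne (θ i - θ' j) 0 with h0 | h0
    · simp [h0]
    · have hnp : 0 < ‖θ i - θ' j‖ := norm_pos_iff.2 h0
      have : |(inner ℝ (θ i - θ' j) (η i j ω) : ℝ)| / ‖θ i - θ' j‖ ≤ ζ1 ω := by
        rw [hζ1]
        exact le_csSup hZ1bdd ⟨i, j, hij, rfl⟩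
      calc |(inner ℝ (θ i - θ' j) (η i j ω) : ℝ)|
          = (|(inner ℝ (θ i - θ' j) (η i j ω) : ℝ)| / ‖θ i - θ' j‖) * ‖θ i - θ' j‖ := by
            field_simp
        _ ≤ ζ1 ω * ‖θ i - θ' j‖ := by
            exact mul_le_mul_of_nonneg_right this hnp.le
        _ = ‖θ i - θ' j‖ * ζ1 ω := mul_comm _ _
  -- ζ2 facts
  have hZ2bdd : BddAbove {r : ℝ | ∃ i j, r = abs (‖η i j ω‖^2 - (d:ℝ))} := by
    refine BddAbove.mono (t := Set.range (fun p : Fin n × Fin m =>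
      abs (‖η p.1 p.2 ω‖^2 - (d:ℝ)))) ?_ ((Set.finite_range _).bddAbove)
    rintro r ⟨i, j, rfl⟩
    exact ⟨(i, j), rfl⟩
  have hζ2bd : ∀ i j, |‖η i j ω‖^2 - (d:ℝ)| ≤ Real.sqrt d * ζ2 ω := by
    intro i j
    rw [hζ2, ← mul_assoc, mul_inv_cancel₀ (ne_of_gt hdpos), one_mul]
    exact le_csSup hZ2bdd ⟨i, j, rfl⟩
  have hzge : 0 ≤ Real.sqrt d * ζ2 ω := le_trans (abs_nonneg _) (hζ2bd i0 (π i0))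
  -- the set G of good indices
  set G : Finset (Fin n) := S.filter (fun i => i ∈ Sstar ∧ π i = πstar i) with hG
  have hGS : G ⊆ S := Finset.filter_subset _ _
  have hGS0 : G ⊆ S0 := by
    intro i hi
    rw [hG, Finset.mem_filter] at hi
    exact hS0plus i hi.1 hi.2.1 hi.2.2
  have hi0G : i0 ∉ G := by
    rw [hG, Finset.mem_filter]
    tauto
  -- per-pair lower bound for bad pairs
  have hbad : ∀ i ∈ S \ G,
      A * ((3/4)*κbar^2 + (d:ℝ) - Real.sqrt d * ζ2 ω) ≤ ‖X i ω - X' (π i) ω‖^2 := by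
    intro i hi
    rw [Finset.mem_sdiff] at hi
    have hib : ¬(i ∈ Sstar ∧ π i = πstar i) := by
      intro h
      exact hi.2 (by rw [hG, Finset.mem_filter]; exact ⟨hi.1, h⟩)
    obtain ⟨κ, hκdef⟩ : ∃ x : ℝ, x = ‖θ i - θ' (π i)‖ / σ0 := ⟨_, rfl⟩
    have hκ : κbar ≤ κ := hκdef ▸ hκle i (π i) hib
    have hκnn : 0 ≤ κ := le_trans hκnonneg hκ
    have hnrm : ‖θ i - θ' (π i)‖ = κ * σ0 := by
      rw [hκdef]; field_simp
    have hinner : |(inner ℝ (θ i - θ' (π i)) (η i (π i) ω) : ℝ)| ≤ κ * σ0 * ζ1 ω := by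
      rw [← hnrm]; exact hζ1bd i (π i) hib
    have hη2 : (d:ℝ) - Real.sqrt d * ζ2 ω ≤ ‖η i (π i) ω‖^2 := by
      have := hζ2bd i (π i)
      have := abs_le.1 this
      linarith [this.1]
    rw [hnormsq i (π i), hnrm]
    have hin : -(κ * σ0 * ζ1 ω) ≤ (inner ℝ (θ i - θ' (π i)) (η i (π i) ω) : ℝ) :=
      neg_le_of_abs_le hinner
    have h1 : κ * ζ1 ω ≤ κ * (κbar / 8) :=
      mul_le_mul_of_nonneg_left (by linarith) hκnn
    have h2 : κbar * κbar ≤ κ * κ := mul_le_mul hκ hκ hκnonneg hκnn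
    have hs1 : κ * κbar ≤ κ * κ := mul_le_mul_of_nonneg_left hκ hκnn
    have hA2 : (κ*σ0)^2 = A * (κ*κ) := by rw [mul_pow, hσ0sq]; ring
    have hcross : (3/4)*(κbar*κbar) ≤ κ*κ - 2*(κ*ζ1 ω) := by linarith
    have e1 : -(2*A*(κ*ζ1 ω)) ≤ 2*σ0*(inner ℝ (θ i - θ' (π i)) (η i (π i) ω) : ℝ) := by
      have h := mul_le_mul_of_nonneg_left hin (by positivity : (0:ℝ) ≤ 2*σ0)
      calc -(2*A*(κ*ζ1 ω)) = 2*σ0*(-(κ*σ0*ζ1 ω)) := by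
            rw [← hσ0sq]; ring
        _ ≤ _ := h
    have e2 : A*((d:ℝ) - Real.sqrt d * ζ2 ω) ≤ A*‖η i (π i) ω‖^2 :=
      mul_le_mul_of_nonneg_left hη2 hApos.le
    have e3 : A*((3/4)*(κbar*κbar)) ≤ A*(κ*κ - 2*(κ*ζ1 ω)) :=
      mul_le_mul_of_nonneg_left hcross hApos.le
    have hκb2 : κbar^2 = κbar*κbar := sq κbar
    linarith only [e1, e2, e3, hA2, hκb2]
  -- per-pair upper bound for pairs in S0 \ G
  have hgood : ∀ i ∈ S0 \ G,
      ‖X i ω - X' (πstar i) ω‖^2 ≤ A * ((d:ℝ) + Real.sqrt d * ζ2 ω) := by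
    intro i hi
    rw [Finset.mem_sdiff] at hi
    have hiS : i ∈ Sstar := hS0sub hi.1
    have hθ : θ i - θ' (πstar i) = 0 := sub_eq_zero.2 (hmatch i hiS)
    have hη2 : ‖η i (πstar i) ω‖^2 ≤ (d:ℝ) + Real.sqrt d * ζ2 ω := by
      have := abs_le.1 (hζ2bd i (πstar i))
      linarith [this.2]
    rw [hnormsq i (πstar i), hθ]
    have : (inner ℝ (0 : EuclideanSpace ℝ (Fin d)) (η i (πstar i) ω) : ℝ) = 0 :=
      inner_zero_left _
    rw [this, norm_zero]
    have h5 := mul_le_mul_of_nonneg_left hη2 hApos.le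
    linarith only [h5]
  -- sum decompositions
  have hsumS : ∑ i ∈ S, ‖X i ω - X' (π i) ω‖^2
      = (∑ i ∈ S \ G, ‖X i ω - X' (π i) ω‖^2) + ∑ i ∈ G, ‖X i ω - X' (πstar i) ω‖^2 := by
    rw [← Finset.sum_sdiff hGS]
    congr 1
    refine Finset.sum_congr rfl fun i hi => ?_
    rw [hG, Finset.mem_filter] at hi
    rw [hi.2.2]
  have hsumS0 : ∑ i ∈ S0, ‖X i ω - X' (πstar i) ω‖^2
      = (∑ i ∈ S0 \ G, ‖X i ω - X' (πstar i) ω‖^2) + ∑ i ∈ G, ‖X i ω - X' (πstar i) ω‖^2 :=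
    (Finset.sum_sdiff hGS0).symm
  -- cardinalities
  have hb1 : 1 ≤ (S \ G).card := by
    refine Finset.card_pos.2 ⟨i0, ?_⟩
    rw [Finset.mem_sdiff]; exact ⟨hi0S, hi0G⟩
  have hcardS : ((S \ G).card : ℝ) = (S.card : ℝ) - (G.card : ℝ) := by
    rw [Finset.card_sdiff_of_subset hGS, Nat.cast_sub (Finset.card_le_card hGS)]
  have hcardS0 : ((S0 \ G).card : ℝ) = (S0.card : ℝ) - (G.card : ℝ) := by
    rw [Finset.card_sdiff_of_subset hGS0, Nat.cast_sub (Finset.card_le_card hGS0)]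
  -- bound the two sums
  have hbdS : ((S \ G).card : ℝ) * (A * ((3/4)*κbar^2 + (d:ℝ) - Real.sqrt d * ζ2 ω))
      ≤ ∑ i ∈ S \ G, ‖X i ω - X' (π i) ω‖^2 := by
    have := Finset.card_nsmul_le_sum (S \ G) _ _ hbad
    rwa [nsmul_eq_mul] at this
  have hbdS0 : ∑ i ∈ S0 \ G, ‖X i ω - X' (πstar i) ω‖^2
      ≤ ((S0 \ G).card : ℝ) * (A * ((d:ℝ) + Real.sqrt d * ζ2 ω)) := by
    have := Finset.sum_le_card_nsmul (S0 \ G) _ _ hgood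
    rwa [nsmul_eq_mul] at this
  -- final computation
  rw [ge_iff_le, div_sub_div_same, le_div_iff₀ hApos, hsumS, hsumS0]
  obtain ⟨B, hB⟩ : ∃ x : ℝ, x = ((S \ G).card : ℝ) := ⟨_, rfl⟩
  obtain ⟨C, hC⟩ : ∃ x : ℝ, x = ((S0 \ G).card : ℝ) := ⟨_, rfl⟩
  obtain ⟨z, hzdef⟩ : ∃ x : ℝ, x = Real.sqrt d * ζ2 ω := ⟨_, rfl⟩
  rw [← hB] at hbdS
  rw [← hC] at hbdS0
  rw [← hzdef] at hbdS hbdS0 hzge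
  have hB1 : 1 ≤ B := by rw [hB]; exact_mod_cast hb1
  have hC0 : 0 ≤ C := by rw [hC]; exact Nat.cast_nonneg _
  have hBC : B - C = (S.card : ℝ) - (S0.card : ℝ) := by
    rw [hB, hC, hcardS, hcardS0]; ring
  have hκsq : 0 ≤ κbar^2 := sq_nonneg _
  have h4z : 4 * z ≤ κbar^2 := by rw [hzdef]; linarith [hz2]
  have hz0 : 0 ≤ z := hzge
  have h8 : 0 ≤ A * ((B + C) * (κbar^2 - 4*z)) :=
    mul_nonneg hApos.le (mul_nonneg (by linarith) (by linarith))
  have h9 : 0 ≤ A * ((2*B - C - 1) * κbar^2) := by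
    have hBgeC : C ≤ B := by
      have hc : (S0.card : ℝ) ≤ (S.card : ℝ) := by exact_mod_cast hS0card
      linarith [hBC]
    exact mul_nonneg hApos.le (mul_nonneg (by linarith) hκsq)
  have key : (κbar^2/4 + (d:ℝ)*((S.card:ℝ) - (S0.card:ℝ))) * A
      ≤ B * (A * ((3/4)*κbar^2 + (d:ℝ) - z))
        - C * (A * ((d:ℝ) + z)) := by
    rw [← hBC]
    linarith only [h8, h9]
  linarith only [key, hbdS, hbdS0]
end

section
/- Lemma 5: Assume k* + 1 ≤ min(n,m). Pointwise on the event Ω0 = {8ζ1 ≤ κ̄_all and 4√d·ζ2 ≤ κ̄_all²}, one has L̂(k*+1) − L̂(k*) ≥ d + κ̄_all²/4. -/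
open MeasureTheory ProbabilityTheory

set_option linter.unusedVariables false

theorem stmt_5
    {d n m kstar : ℕ}
    (hd : 1 ≤ d) (hn : 2 ≤ n) (hnm : n ≤ m)
    {Ω : Type*} [MeasurableSpace Ω] (P : Measure Ω) [IsProbabilityMeasure P]
    (θ : Fin n → EuclideanSpace ℝ (Fin d)) (θ' : Fin m → EuclideanSpace ℝ (Fin d))
    (σ σ' : ℝ) (hσ : 0 < σ) (hσ' : 0 < σ')
    (ξ : (Fin n ⊕ Fin m) × Fin d → Ω → ℝ)
    (hmeas : ∀ p, Measurable (ξ p))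
    (hindep : iIndepFun ξ P)
    (hgauss : ∀ p, P.map (ξ p) = gaussianReal 0 1)
    (Sstar : Finset (Fin n)) (hkstar : Sstar.card = kstar)
    (πstar : Fin n → Fin m) (hπstar : Set.InjOn πstar ↑Sstar)
    (hmatch : ∀ i ∈ Sstar, θ i = θ' (πstar i))
    (X : Fin n → Ω → EuclideanSpace ℝ (Fin d))
    (X' : Fin m → Ω → EuclideanSpace ℝ (Fin d))
    (hX : ∀ i ω t, X i ω t = θ i t + σ * ξ (Sum.inl i, t) ω)
    (hX' : ∀ j ω t, X' j ω t = θ' j t + σ' * ξ (Sum.inr j, t) ω)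
    (η : Fin n → Fin m → Ω → EuclideanSpace ℝ (Fin d))
    (hη : ∀ i j ω t, η i j ω t =
      (σ * ξ (Sum.inl i, t) ω - σ' * ξ (Sum.inr j, t) ω) / Real.sqrt (σ^2 + σ'^2))
    (κbar : ℝ)
    (hκbar : κbar = sInf {r : ℝ | ∃ i j, ¬(i ∈ Sstar ∧ j = πstar i) ∧
        r = ‖θ i - θ' j‖ / Real.sqrt (σ^2 + σ'^2)})
    (ζ1 ζ2 : Ω → ℝ)
    (hζ1 : ∀ ω, ζ1 ω = sSup {r : ℝ | ∃ i j, ¬(i ∈ Sstar ∧ j = πstar i) ∧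
        r = abs ((inner ℝ (θ i - θ' j) (η i j ω) : ℝ)) / ‖θ i - θ' j‖})
    (hζ2 : ∀ ω, ζ2 ω = (Real.sqrt d)⁻¹ * sSup {r : ℝ | ∃ i j, r = abs (‖η i j ω‖^2 - (d:ℝ))})
    (Φhat : ℕ → Ω → ℝ)
    (hΦhat : ∀ k ω, Φhat k ω = sInf {r : ℝ | ∃ (S : Finset (Fin n)) (π : Fin n → Fin m),
        S.card = k ∧ Set.InjOn π ↑S ∧ r = ∑ i ∈ S, ‖X i ω - X' (π i) ω‖^2})
    (Lhat : ℕ → Ω → ℝ)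
    (hLhat : ∀ k ω, Lhat k ω = sInf {r : ℝ | ∃ (S : Finset (Fin n)) (π : Fin n → Fin m),
        S.card = k ∧ Set.InjOn π ↑S ∧ r = (∑ i ∈ S, ‖X i ω - X' (π i) ω‖^2) / (σ^2 + σ'^2)})
    (hk : kstar + 1 ≤ min n m)
    (ω : Ω)
    (hΩ0 : 8 * ζ1 ω ≤ κbar ∧ 4 * Real.sqrt d * ζ2 ω ≤ κbar^2) :
    Lhat (kstar + 1) ω - Lhat kstar ω ≥ (d : ℝ) + κbar^2 / 4 := by
  obtain ⟨hz1, hz2⟩ := hΩ0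
  have hσsq : (0:ℝ) < σ^2 + σ'^2 := by positivity
  set σ0 : ℝ := Real.sqrt (σ^2 + σ'^2) with hσ0def
  have hσ0pos : 0 < σ0 := Real.sqrt_pos.mpr hσsq
  have hσ0sq : σ0^2 = σ^2 + σ'^2 := Real.sq_sqrt hσsq.le
  have hdpos : (0:ℝ) < Real.sqrt d := Real.sqrt_pos.mpr (by exact_mod_cast hd)
  -- vector decomposition
  have hdecomp : ∀ i j, X i ω - X' j ω = (θ i - θ' j) + σ0 • η i j ω := by
    intro i j
    ext t
    show X i ω t - X' j ω t = (θ i t - θ' j t) + σ0 * η i j ω t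
    rw [hX, hX', hη]
    field_simp
    ring
  -- norm expansion
  have hg : ∀ i j, ‖X i ω - X' j ω‖^2 / (σ^2 + σ'^2)
      = (‖θ i - θ' j‖/σ0)^2 + 2 * (inner ℝ (θ i - θ' j) (η i j ω) : ℝ) / σ0
        + ‖η i j ω‖^2 := by
    intro i j
    have key : ∀ (T A E : ℝ), (T^2 + 2*(σ0*A) + (σ^2+σ'^2)*E)/(σ^2+σ'^2)
        = (T/σ0)^2 + 2*A/σ0 + E := by
      intro T A E
      rw [← hσ0sq]
      field_simp
    rw [hdecomp i j, norm_add_sq_real, real_inner_smul_right, norm_smul,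
      Real.norm_eq_abs, abs_of_pos hσ0pos, mul_pow, hσ0sq, key]
  -- κbar basic facts
  have hκnn : 0 ≤ κbar := by
    rw [hκbar]
    apply Real.sInf_nonneg
    rintro r ⟨i, j, -, rfl⟩
    positivity
  have hκle : ∀ i j, ¬(i ∈ Sstar ∧ j = πstar i) → κbar ≤ ‖θ i - θ' j‖ / σ0 := by
    intro i j hbad
    rw [hκbar]
    refine csInf_le ?_ ⟨i, j, hbad, rfl⟩
    refine Set.Finite.bddBelow (Set.Finite.subset (Set.finite_range
      (fun p : Fin n × Fin m => ‖θ p.1 - θ' p.2‖ / σ0)) ?_)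
    rintro r ⟨i, j, -, rfl⟩
    exact ⟨(i, j), rfl⟩
  -- ζ1 bound
  have hζ1bound : ∀ i j, ¬(i ∈ Sstar ∧ j = πstar i) →
      |(inner ℝ (θ i - θ' j) (η i j ω) : ℝ)| ≤ ζ1 ω * ‖θ i - θ' j‖ := by
    intro i j hbad
    rcases eq_or_lt_of_le (norm_nonneg (θ i - θ' j)) with h0 | h0
    · have : θ i - θ' j = 0 := by
        rw [← norm_eq_zero]; exact h0.symm
      simp [this]
    · have hmem : |(inner ℝ (θ i - θ' j) (η i j ω) : ℝ)| / ‖θ i - θ' j‖ ≤ ζ1 ω := by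
        rw [hζ1]
        refine le_csSup ?_ ⟨i, j, hbad, rfl⟩
        refine Set.Finite.bddAbove (Set.Finite.subset (Set.finite_range
          (fun p : Fin n × Fin m =>
            |(inner ℝ (θ p.1 - θ' p.2) (η p.1 p.2 ω) : ℝ)| / ‖θ p.1 - θ' p.2‖)) ?_)
        rintro r ⟨i, j, -, rfl⟩
        exact ⟨(i, j), rfl⟩
      calc |(inner ℝ (θ i - θ' j) (η i j ω) : ℝ)|
          = |(inner ℝ (θ i - θ' j) (η i j ω) : ℝ)| / ‖θ i - θ' j‖ * ‖θ i - θ' j‖ := by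
            field_simp
        _ ≤ ζ1 ω * ‖θ i - θ' j‖ := by
            exact mul_le_mul_of_nonneg_right hmem (norm_nonneg _)
  -- ζ2 bound
  have hζ2bound : ∀ i j, |‖η i j ω‖^2 - (d:ℝ)| ≤ Real.sqrt d * ζ2 ω := by
    intro i j
    rw [hζ2, ← mul_assoc, mul_inv_cancel₀ hdpos.ne', one_mul]
    refine le_csSup ?_ ⟨i, j, rfl⟩
    refine Set.Finite.bddAbove (Set.Finite.subset (Set.finite_range
      (fun p : Fin n × Fin m => |‖η p.1 p.2 ω‖^2 - (d:ℝ)|)) ?_)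
    rintro r ⟨i, j, rfl⟩
    exact ⟨(i, j), rfl⟩
  -- bad pair lower bound
  have hbadLB : ∀ i j, ¬(i ∈ Sstar ∧ j = πstar i) →
      (d:ℝ) + κbar^2 / 2 ≤ ‖X i ω - X' j ω‖^2 / (σ^2 + σ'^2) := by
    intro i j hbad
    rw [hg i j]
    set K : ℝ := ‖θ i - θ' j‖ / σ0 with hKdef
    set a : ℝ := (inner ℝ (θ i - θ' j) (η i j ω) : ℝ) with hadef
    have hKκ : κbar ≤ K := hκle i j hbad
    have hK0 : 0 ≤ K := hκnn.trans hKκ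
    have ha : |a| ≤ ζ1 ω * (K * σ0) := by
      have := hζ1bound i j hbad
      have hθ : ‖θ i - θ' j‖ = K * σ0 := by
        rw [hKdef]; field_simp
      rwa [hθ] at this
    have h2a : -(2 * ζ1 ω * K) ≤ 2 * a / σ0 := by
      rw [le_div_iff₀ hσ0pos]
      nlinarith [neg_abs_le a, hσ0pos]
    have hE : (d:ℝ) - κbar^2/4 ≤ ‖η i j ω‖^2 := by
      have h1 := hζ2bound i j
      have h2 := neg_abs_le (‖η i j ω‖^2 - (d:ℝ))
      nlinarith
    have hz1K : 2 * ζ1 ω * K ≤ K^2 / 4 := by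
      nlinarith [mul_le_mul_of_nonneg_right hz1 hK0, mul_le_mul_of_nonneg_left hKκ hK0]
    have hKsq : κbar^2 ≤ K^2 := pow_le_pow_left₀ hκnn hKκ 2
    set B : ℝ := 2 * a / σ0
    set E : ℝ := ‖η i j ω‖^2
    linarith
  -- nonemptiness/finiteness of Lhat sets
  have hLset : ∀ k : ℕ, k ≤ n →
      ((Set.Finite {r : ℝ | ∃ (S : Finset (Fin n)) (π : Fin n → Fin m),
        S.card = k ∧ Set.InjOn π ↑S ∧ r = (∑ i ∈ S, ‖X i ω - X' (π i) ω‖^2) / (σ^2 + σ'^2)})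
      ∧ Set.Nonempty {r : ℝ | ∃ (S : Finset (Fin n)) (π : Fin n → Fin m),
        S.card = k ∧ Set.InjOn π ↑S ∧ r = (∑ i ∈ S, ‖X i ω - X' (π i) ω‖^2) / (σ^2 + σ'^2)}) := by
    intro k hkn
    constructor
    · refine Set.Finite.subset (Set.finite_range
        (fun p : Finset (Fin n) × (Fin n → Fin m) =>
          (∑ i ∈ p.1, ‖X i ω - X' (p.2 i) ω‖^2) / (σ^2 + σ'^2))) ?_
      rintro r ⟨S, π, -, -, rfl⟩
      exact ⟨(S, π), rfl⟩
    · obtain ⟨S, -, hScard⟩ := Finset.exists_subset_card_eq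
        (s := (Finset.univ : Finset (Fin n))) (n := k) (by simpa using hkn)
      exact ⟨_, S, fun i => Fin.castLE hnm i, hScard,
        ((Fin.castLE_injective hnm).injOn), rfl⟩
  have hk1n : kstar + 1 ≤ n := hk.trans (min_le_left n m)
  obtain ⟨hfin1, hne1⟩ := hLset (kstar + 1) hk1n
  obtain ⟨hfin0, hne0⟩ := hLset kstar (by omega)
  -- minimizer for Lhat (kstar+1)
  have hmem := hne1.csInf_mem hfin1
  obtain ⟨S, π, hScard, hπinj, hval⟩ := hmem
  -- find a bad index in S
  have hbadex : ∃ i0 ∈ S, ¬(i0 ∈ Sstar ∧ π i0 = πstar i0) := by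
    by_contra h
    push_neg at h
    have hsub : S ⊆ Sstar := fun i hi => (h i hi).1
    have := Finset.card_le_card hsub
    omega
  obtain ⟨i0, hi0S, hi0bad⟩ := hbadex
  -- split the sum
  have hsum : ∑ i ∈ S, ‖X i ω - X' (π i) ω‖^2
      = (∑ i ∈ S.erase i0, ‖X i ω - X' (π i) ω‖^2) + ‖X i0 ω - X' (π i0) ω‖^2 := by
    rw [Finset.sum_erase_add _ _ hi0S]
  have hLk : Lhat kstar ω ≤ (∑ i ∈ S.erase i0, ‖X i ω - X' (π i) ω‖^2) / (σ^2 + σ'^2) := by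
    rw [hLhat]
    refine csInf_le hfin0.bddBelow ?_
    exact ⟨S.erase i0, π, by rw [Finset.card_erase_of_mem hi0S, hScard]; omega,
      hπinj.mono (Finset.coe_subset.2 (Finset.erase_subset _ _)), rfl⟩
  have hbad' := hbadLB i0 (π i0) hi0bad
  have hL1 : Lhat (kstar + 1) ω
      = (∑ i ∈ S.erase i0, ‖X i ω - X' (π i) ω‖^2) / (σ^2 + σ'^2)
        + ‖X i0 ω - X' (π i0) ω‖^2 / (σ^2 + σ'^2) := by
    rw [hLhat, hval, hsum, add_div]
  rw [hL1]
  have hκsq : 0 ≤ κbar^2 := sq_nonneg κbar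
  linarith
end

section
/- Lemma 6: For every k with 1 ≤ k < k*, pointwise on the event Ω0 = {8ζ1 ≤ κ̄_all and 4√d·ζ2 ≤ κ̄_all²}, one has L̂(k+1) − L̂(k) ≤ d + √d·ζ2. -/
lemma aux_comb {n m : ℕ} (Sstar : Finset (Fin n)) (πstar : Fin n → Fin m)
    (hπ : Set.InjOn πstar ↑Sstar)
    (c : Fin n → Fin m → ℝ) (D : ℝ)
    (htrue : ∀ i ∈ Sstar, c i (πstar i) ≤ D)
    (hwrong : ∀ i j, ¬(i ∈ Sstar ∧ j = πstar i) → D ≤ c i j) :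
    ∀ (N : ℕ) (S : Finset (Fin n)) (π : Fin n → Fin m),
      (S \ Sstar).card + (S.filter (fun i => i ∈ Sstar ∧ π i ≠ πstar i)).card ≤ N →
      S.card < Sstar.card → Set.InjOn π ↑S →
      ∃ S' : Finset (Fin n), ∃ π' : Fin n → Fin m,
        S'.card = S.card + 1 ∧ Set.InjOn π' ↑S' ∧
        ∑ i ∈ S', c i (π' i) ≤ (∑ i ∈ S, c i (π i)) + D := by
  have case1 : ∀ (S : Finset (Fin n)) (π : Fin n → Fin m), Set.InjOn π ↑S →
      ∀ i0, i0 ∈ Sstar → i0 ∉ S → (∀ i ∈ S, π i ≠ πstar i0) →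
      ∃ S' : Finset (Fin n), ∃ π' : Fin n → Fin m,
        S'.card = S.card + 1 ∧ Set.InjOn π' ↑S' ∧
        ∑ i ∈ S', c i (π' i) ≤ (∑ i ∈ S, c i (π i)) + D := by
    intro S π hinj i0 hi0star hi0S hmiss
    refine ⟨insert i0 S, Function.update π i0 (πstar i0), Finset.card_insert_of_notMem hi0S, ?_, ?_⟩
    · intro x hx y hy hxy
      simp only [Finset.coe_insert, Set.mem_insert_iff, Finset.mem_coe] at hx hy
      rcases hx with rfl | hx <;> rcases hy with rfl | hy
      · rfl
      · exfalso
        rw [Function.update_self, Function.update_of_ne (by rintro rfl; exact hi0S hy)] at hxy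
        exact hmiss y hy hxy.symm
      · exfalso
        rw [Function.update_self, Function.update_of_ne (by rintro rfl; exact hi0S hx)] at hxy
        exact hmiss x hx hxy
      · rw [Function.update_of_ne (by rintro rfl; exact hi0S hx),
          Function.update_of_ne (by rintro rfl; exact hi0S hy)] at hxy
        exact hinj hx hy hxy
    · rw [Finset.sum_insert hi0S, Function.update_self]
      have he : ∑ i ∈ S, c i (Function.update π i0 (πstar i0) i) = ∑ i ∈ S, c i (π i) :=
        Finset.sum_congr rfl fun i hi => by
          rw [Function.update_of_ne (by rintro rfl; exact hi0S hi)]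
      rw [he]
      have := htrue i0 hi0star
      linarith
  intro N
  induction N with
  | zero =>
    intro S π hμ hcard hinj
    obtain ⟨i0, hi0star, hi0S⟩ :=
      Finset.not_subset.mp (fun h => absurd (Finset.card_le_card h) (not_le.mpr hcard))
    by_cases hex : ∃ i1 ∈ S, π i1 = πstar i0
    · exfalso
      obtain ⟨i1, hi1S, hπi1⟩ := hex
      have hne : i1 ≠ i0 := fun h => hi0S (h ▸ hi1S)
      by_cases hi1star : i1 ∈ Sstar
      · have hmem : i1 ∈ S.filter (fun i => i ∈ Sstar ∧ π i ≠ πstar i) := by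
          refine Finset.mem_filter.mpr ⟨hi1S, hi1star, ?_⟩
          rw [hπi1]
          exact fun h => hne (hπ (Finset.mem_coe.mpr hi1star) (Finset.mem_coe.mpr hi0star) h.symm)
        have := Finset.card_pos.mpr ⟨i1, hmem⟩
        omega
      · have hmem : i1 ∈ S \ Sstar := Finset.mem_sdiff.mpr ⟨hi1S, hi1star⟩
        have := Finset.card_pos.mpr ⟨i1, hmem⟩
        omega
    · push_neg at hex
      exact case1 S π hinj i0 hi0star hi0S hex
  | succ N ih =>
    intro S π hμ hcard hinj
    obtain ⟨i0, hi0star, hi0S⟩ :=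
      Finset.not_subset.mp (fun h => absurd (Finset.card_le_card h) (not_le.mpr hcard))
    by_cases hex : ∃ i1 ∈ S, π i1 = πstar i0
    · obtain ⟨i1, hi1S, hπi1⟩ := hex
      have hne : i1 ≠ i0 := fun h => hi0S (h ▸ hi1S)
      set St := insert i0 (S.erase i1) with hSt
      set πt := Function.update π i0 (πstar i0) with hπt
      have hi0e : i0 ∉ S.erase i1 := fun h => hi0S (Finset.mem_of_mem_erase h)
      have hcardSt : St.card = S.card := by
        rw [hSt, Finset.card_insert_of_notMem hi0e, Finset.card_erase_add_one hi1S]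
      have hmemSt : ∀ x, x ∈ St → x = i0 ∨ (x ≠ i1 ∧ x ∈ S) := by
        intro x hx
        rcases Finset.mem_insert.mp hx with h | h
        · exact Or.inl h
        · exact Or.inr ⟨(Finset.mem_erase.mp h).1, (Finset.mem_erase.mp h).2⟩
      have hπtx : ∀ x, x ≠ i0 → πt x = π x := fun x hx => Function.update_of_ne hx _ _
      have hπt0 : πt i0 = πstar i0 := Function.update_self _ _ _
      have hinjt : Set.InjOn πt ↑St := by
        intro x hx y hy hxy
        simp only [hSt, Finset.coe_insert, Set.mem_insert_iff, Finset.mem_coe] at hx hy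
        rcases hx with rfl | hx <;> rcases hy with rfl | hy
        · rfl
        · exfalso
          have hy' := Finset.mem_erase.mp hy
          rw [hπt0, hπtx y (fun h => hi0e (h ▸ hy))] at hxy
          exact hy'.1 (hinj (Finset.mem_coe.mpr hy'.2) (Finset.mem_coe.mpr hi1S) (hxy.symm.trans hπi1.symm))
        · exfalso
          have hx' := Finset.mem_erase.mp hx
          rw [hπt0, hπtx x (fun h => hi0e (h ▸ hx))] at hxy
          exact hx'.1 (hinj (Finset.mem_coe.mpr hx'.2) (Finset.mem_coe.mpr hi1S) (hxy.trans hπi1.symm))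
        · rw [hπtx x (fun h => hi0e (h ▸ hx)), hπtx y (fun h => hi0e (h ▸ hy))] at hxy
          exact hinj (Finset.mem_coe.mpr (Finset.mem_of_mem_erase hx))
            (Finset.mem_coe.mpr (Finset.mem_of_mem_erase hy)) hxy
      -- filter subset facts
      have hfilt : ∀ x, x ∈ St.filter (fun i => i ∈ Sstar ∧ πt i ≠ πstar i) →
          x ≠ i1 ∧ x ∈ S.filter (fun i => i ∈ Sstar ∧ π i ≠ πstar i) := by
        intro x hx
        obtain ⟨hxSt, hxstar, hxne⟩ := Finset.mem_filter.mp hx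
        have hxi0 : x ≠ i0 := by
          rintro rfl
          exact hxne hπt0
        rcases hmemSt x hxSt with rfl | ⟨h1, h2⟩
        · exact absurd rfl hxi0
        · exact ⟨h1, Finset.mem_filter.mpr ⟨h2, hxstar, by rwa [hπtx x hxi0] at hxne⟩⟩
      have hsd : ∀ x, x ∈ St \ Sstar → x ≠ i1 ∧ x ∈ S \ Sstar := by
        intro x hx
        obtain ⟨hxSt, hxstar⟩ := Finset.mem_sdiff.mp hx
        rcases hmemSt x hxSt with rfl | ⟨h1, h2⟩
        · exact absurd hi0star hxstar
        · exact ⟨h1, Finset.mem_sdiff.mpr ⟨h2, hxstar⟩⟩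
      have hμ' : (St \ Sstar).card + (St.filter (fun i => i ∈ Sstar ∧ πt i ≠ πstar i)).card ≤ N := by
        by_cases hi1star : i1 ∈ Sstar
        · have hbad : i1 ∈ S.filter (fun i => i ∈ Sstar ∧ π i ≠ πstar i) := by
            refine Finset.mem_filter.mpr ⟨hi1S, hi1star, ?_⟩
            rw [hπi1]
            exact fun h => hne (hπ (Finset.mem_coe.mpr hi1star) (Finset.mem_coe.mpr hi0star) h.symm)
          have h1 : (St \ Sstar).card ≤ (S \ Sstar).card :=
            Finset.card_le_card (fun x hx => (hsd x hx).2)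
          have h2 : (St.filter (fun i => i ∈ Sstar ∧ πt i ≠ πstar i)).card ≤
              ((S.filter (fun i => i ∈ Sstar ∧ π i ≠ πstar i)).erase i1).card :=
            Finset.card_le_card (fun x hx => Finset.mem_erase.mpr ⟨(hfilt x hx).1, (hfilt x hx).2⟩)
          rw [Finset.card_erase_of_mem hbad] at h2
          have h3 := Finset.card_pos.mpr ⟨i1, hbad⟩
          omega
        · have hmem : i1 ∈ S \ Sstar := Finset.mem_sdiff.mpr ⟨hi1S, hi1star⟩
          have h1 : (St \ Sstar).card ≤ ((S \ Sstar).erase i1).card :=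
            Finset.card_le_card (fun x hx => Finset.mem_erase.mpr ⟨(hsd x hx).1, (hsd x hx).2⟩)
          have h2 : (St.filter (fun i => i ∈ Sstar ∧ πt i ≠ πstar i)).card ≤
              (S.filter (fun i => i ∈ Sstar ∧ π i ≠ πstar i)).card :=
            Finset.card_le_card (fun x hx => (hfilt x hx).2)
          rw [Finset.card_erase_of_mem hmem] at h1
          have h3 := Finset.card_pos.mpr ⟨i1, hmem⟩
          omega
      have hsum : ∑ i ∈ St, c i (πt i) ≤ ∑ i ∈ S, c i (π i) := by
        rw [hSt, Finset.sum_insert hi0e]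
        have he : ∑ i ∈ S.erase i1, c i (πt i) = ∑ i ∈ S.erase i1, c i (π i) :=
          Finset.sum_congr rfl fun i hi => by rw [hπtx i (fun h => hi0e (h ▸ hi))]
        rw [he, ← Finset.add_sum_erase S _ hi1S]
        have hD1 : c i0 (πt i0) ≤ D := by
          rw [hπt0]; exact htrue i0 hi0star
        have hD2 : D ≤ c i1 (π i1) := by
          refine hwrong i1 (π i1) ?_
          rintro ⟨h1, h2⟩
          rw [hπi1] at h2
          exact hne (hπ (Finset.mem_coe.mpr hi0star) (Finset.mem_coe.mpr h1) h2).symm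
        linarith
      obtain ⟨S', π', hc', hinj', hsum'⟩ := ih St πt hμ' (hcardSt ▸ hcard) hinjt
      exact ⟨S', π', by rw [hc', hcardSt], hinj', by linarith⟩
    · push_neg at hex
      exact case1 S π hinj i0 hi0star hi0S hex

open MeasureTheory ProbabilityTheory

set_option maxHeartbeats 1000000

set_option linter.unusedVariables false

theorem stmt_6
    {d n m kstar : ℕ}
    (hd : 1 ≤ d) (hn : 2 ≤ n) (hnm : n ≤ m)
    {Ω : Type*} [MeasurableSpace Ω] (P : Measure Ω) [IsProbabilityMeasure P]
    (θ : Fin n → EuclideanSpace ℝ (Fin d)) (θ' : Fin m → EuclideanSpace ℝ (Fin d))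
    (σ σ' : ℝ) (hσ : 0 < σ) (hσ' : 0 < σ')
    (ξ : (Fin n ⊕ Fin m) × Fin d → Ω → ℝ)
    (hmeas : ∀ p, Measurable (ξ p))
    (hindep : iIndepFun ξ P)
    (hgauss : ∀ p, P.map (ξ p) = gaussianReal 0 1)
    (Sstar : Finset (Fin n)) (hkstar : Sstar.card = kstar)
    (πstar : Fin n → Fin m) (hπstar : Set.InjOn πstar ↑Sstar)
    (hmatch : ∀ i ∈ Sstar, θ i = θ' (πstar i))
    (X : Fin n → Ω → EuclideanSpace ℝ (Fin d))
    (X' : Fin m → Ω → EuclideanSpace ℝ (Fin d))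
    (hX : ∀ i ω t, X i ω t = θ i t + σ * ξ (Sum.inl i, t) ω)
    (hX' : ∀ j ω t, X' j ω t = θ' j t + σ' * ξ (Sum.inr j, t) ω)
    (η : Fin n → Fin m → Ω → EuclideanSpace ℝ (Fin d))
    (hη : ∀ i j ω t, η i j ω t =
      (σ * ξ (Sum.inl i, t) ω - σ' * ξ (Sum.inr j, t) ω) / Real.sqrt (σ^2 + σ'^2))
    (κbar : ℝ)
    (hκbar : κbar = sInf {r : ℝ | ∃ i j, ¬(i ∈ Sstar ∧ j = πstar i) ∧
        r = ‖θ i - θ' j‖ / Real.sqrt (σ^2 + σ'^2)})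
    (ζ1 ζ2 : Ω → ℝ)
    (hζ1 : ∀ ω, ζ1 ω = sSup {r : ℝ | ∃ i j, ¬(i ∈ Sstar ∧ j = πstar i) ∧
        r = abs ((inner ℝ (θ i - θ' j) (η i j ω) : ℝ)) / ‖θ i - θ' j‖})
    (hζ2 : ∀ ω, ζ2 ω = (Real.sqrt d)⁻¹ * sSup {r : ℝ | ∃ i j, r = abs (‖η i j ω‖^2 - (d:ℝ))})
    (Φhat : ℕ → Ω → ℝ)
    (hΦhat : ∀ k ω, Φhat k ω = sInf {r : ℝ | ∃ (S : Finset (Fin n)) (π : Fin n → Fin m),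
        S.card = k ∧ Set.InjOn π ↑S ∧ r = ∑ i ∈ S, ‖X i ω - X' (π i) ω‖^2})
    (Lhat : ℕ → Ω → ℝ)
    (hLhat : ∀ k ω, Lhat k ω = sInf {r : ℝ | ∃ (S : Finset (Fin n)) (π : Fin n → Fin m),
        S.card = k ∧ Set.InjOn π ↑S ∧ r = (∑ i ∈ S, ‖X i ω - X' (π i) ω‖^2) / (σ^2 + σ'^2)})
    (k : ℕ) (hk1 : 1 ≤ k) (hk2 : k < kstar)
    (ω : Ω)
    (hΩ0 : 8 * ζ1 ω ≤ κbar ∧ 4 * Real.sqrt d * ζ2 ω ≤ κbar^2) :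
    Lhat (k + 1) ω - Lhat k ω ≤ (d : ℝ) + Real.sqrt d * ζ2 ω := by
  have hs2 : (0:ℝ) < σ^2 + σ'^2 := by positivity
  have hs : 0 < Real.sqrt (σ^2 + σ'^2) := Real.sqrt_pos.mpr hs2
  have hss : Real.sqrt (σ^2 + σ'^2)^2 = σ^2 + σ'^2 := Real.sq_sqrt hs2.le
  have hdpos : (0:ℝ) < d := by exact_mod_cast hd
  have hd0 : (0:ℝ) < Real.sqrt d := Real.sqrt_pos.mpr hdpos
  -- decomposition of X - X'
  have hXX' : ∀ i j, X i ω - X' j ω = (θ i - θ' j) + Real.sqrt (σ^2 + σ'^2) • η i j ω := by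
    intro i j
    ext t
    simp only [PiLp.sub_apply, PiLp.add_apply, PiLp.smul_apply, smul_eq_mul, hX, hX', hη]
    field_simp
    ring
  set c : Fin n → Fin m → ℝ := fun i j => ‖X i ω - X' j ω‖^2 / (σ^2 + σ'^2) with hcdef
  -- ζ2 bound
  have hE : ∀ i j, |‖η i j ω‖^2 - (d:ℝ)| ≤ Real.sqrt d * ζ2 ω := by
    intro i j
    have hfin : {r : ℝ | ∃ i j, r = |‖η i j ω‖^2 - (d:ℝ)|}.Finite :=
      Set.Finite.subset (Set.finite_range (fun p : Fin n × Fin m => |‖η p.1 p.2 ω‖^2 - (d:ℝ)|))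
        (by rintro r ⟨i, j, rfl⟩; exact ⟨(i, j), rfl⟩)
    have hle : |‖η i j ω‖^2 - (d:ℝ)| ≤ sSup {r : ℝ | ∃ i j, r = |‖η i j ω‖^2 - (d:ℝ)|} :=
      le_csSup hfin.bddAbove ⟨i, j, rfl⟩
    have heq : Real.sqrt d * ζ2 ω = sSup {r : ℝ | ∃ i j, r = |‖η i j ω‖^2 - (d:ℝ)|} := by
      rw [hζ2 ω, ← mul_assoc, mul_inv_cancel₀ (ne_of_gt hd0), one_mul]
    rw [heq]
    exact hle
  -- wrong pairs exist
  have hW_ne : ∃ i j, ¬(i ∈ Sstar ∧ j = πstar i) := by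
    have hi : (0:ℕ) < n := by omega
    have hj0 : (0:ℕ) < m := by omega
    have hj1 : (1:ℕ) < m := by omega
    set i : Fin n := ⟨0, hi⟩
    by_cases h : i ∈ Sstar
    · rcases eq_or_ne (πstar i) ⟨0, hj0⟩ with h0 | h0
      · exact ⟨i, ⟨1, hj1⟩, fun hc => by rw [h0] at hc; exact absurd hc.2 (by simp [Fin.ext_iff])⟩
      · exact ⟨i, ⟨0, hj0⟩, fun hc => h0 hc.2.symm⟩
    · exact ⟨i, ⟨0, hj0⟩, fun hc => h hc.1⟩
  have hWfin : {r : ℝ | ∃ i j, ¬(i ∈ Sstar ∧ j = πstar i) ∧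
      r = ‖θ i - θ' j‖ / Real.sqrt (σ^2 + σ'^2)}.Finite :=
    Set.Finite.subset (Set.finite_range (fun p : Fin n × Fin m =>
      ‖θ p.1 - θ' p.2‖ / Real.sqrt (σ^2 + σ'^2)))
      (by rintro r ⟨i, j, _, rfl⟩; exact ⟨(i, j), rfl⟩)
  have hκle : ∀ i j, ¬(i ∈ Sstar ∧ j = πstar i) →
      κbar ≤ ‖θ i - θ' j‖ / Real.sqrt (σ^2 + σ'^2) := by
    intro i j hij
    rw [hκbar]
    exact csInf_le hWfin.bddBelow ⟨i, j, hij, rfl⟩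
  have hκ0 : 0 ≤ κbar := by
    obtain ⟨i, j, hij⟩ := hW_ne
    rw [hκbar]
    refine le_csInf ⟨_, i, j, hij, rfl⟩ ?_
    rintro r ⟨i, j, _, rfl⟩
    positivity
  -- ζ1 bound
  have hζ1fin : {r : ℝ | ∃ i j, ¬(i ∈ Sstar ∧ j = πstar i) ∧
      r = |(inner ℝ (θ i - θ' j) (η i j ω) : ℝ)| / ‖θ i - θ' j‖}.Finite :=
    Set.Finite.subset (Set.finite_range (fun p : Fin n × Fin m =>
      |(inner ℝ (θ p.1 - θ' p.2) (η p.1 p.2 ω) : ℝ)| / ‖θ p.1 - θ' p.2‖))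
      (by rintro r ⟨i, j, _, rfl⟩; exact ⟨(i, j), rfl⟩)
  have hζ1b : ∀ i j, ¬(i ∈ Sstar ∧ j = πstar i) →
      |(inner ℝ (θ i - θ' j) (η i j ω) : ℝ)| ≤ ζ1 ω * ‖θ i - θ' j‖ := by
    intro i j hij
    have hle : |(inner ℝ (θ i - θ' j) (η i j ω) : ℝ)| / ‖θ i - θ' j‖ ≤ ζ1 ω := by
      rw [hζ1 ω]
      exact le_csSup hζ1fin.bddAbove ⟨i, j, hij, rfl⟩
    rcases eq_or_lt_of_le (norm_nonneg (θ i - θ' j)) with h0 | h0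
    · have hz : θ i - θ' j = 0 := norm_eq_zero.mp h0.symm
      rw [hz]
      simp
    · rw [div_le_iff₀ h0] at hle
      linarith [hle, mul_comm (ζ1 ω) ‖θ i - θ' j‖]
  have hζ10 : 0 ≤ ζ1 ω := by
    obtain ⟨i, j, hij⟩ := hW_ne
    have : (0:ℝ) ≤ |(inner ℝ (θ i - θ' j) (η i j ω) : ℝ)| / ‖θ i - θ' j‖ := by positivity
    refine le_trans this ?_
    rw [hζ1 ω]
    exact le_csSup hζ1fin.bddAbove ⟨i, j, hij, rfl⟩
  -- cost identity
  have hcost : ∀ i j, c i j = (‖θ i - θ' j‖^2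
      + 2 * Real.sqrt (σ^2 + σ'^2) * (inner ℝ (θ i - θ' j) (η i j ω) : ℝ)
      + (σ^2 + σ'^2) * ‖η i j ω‖^2) / (σ^2 + σ'^2) := by
    intro i j
    have h1 : ‖Real.sqrt (σ^2 + σ'^2) • η i j ω‖^2 = (σ^2 + σ'^2) * ‖η i j ω‖^2 := by
      rw [norm_smul, mul_pow, Real.norm_eq_abs, sq_abs, hss]
    have h2 : (inner ℝ (θ i - θ' j) (Real.sqrt (σ^2 + σ'^2) • η i j ω) : ℝ)
        = Real.sqrt (σ^2 + σ'^2) * (inner ℝ (θ i - θ' j) (η i j ω) : ℝ) :=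
      real_inner_smul_right _ _ _
    rw [hcdef]
    simp only []
    rw [hXX' i j, norm_add_sq_real, h1, h2]
    ring_nf
  -- true pair bound
  have htrue : ∀ i ∈ Sstar, c i (πstar i) ≤ (d:ℝ) + Real.sqrt d * ζ2 ω := by
    intro i hi
    have h0 : θ i - θ' (πstar i) = 0 := by rw [hmatch i hi]; exact sub_self _
    have hEi : ‖η i (πstar i) ω‖^2 ≤ (d:ℝ) + Real.sqrt d * ζ2 ω := by
      have := (abs_le.mp (hE i (πstar i))).2
      linarith
    rw [hcost i (πstar i), h0]
    simp only [norm_zero, inner_zero_left, mul_zero, add_zero]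
    rw [zero_pow (by norm_num : (2:ℕ) ≠ 0), zero_add,
      mul_div_cancel_left₀ _ (ne_of_gt hs2)]
    exact hEi
  -- wrong pair bound
  have hwrongc : ∀ i j, ¬(i ∈ Sstar ∧ j = πstar i) →
      (d:ℝ) + Real.sqrt d * ζ2 ω ≤ c i j := by
    intro i j hij
    rw [hcost i j, le_div_iff₀ hs2]
    set A := ‖θ i - θ' j‖ with hA'
    set I := (inner ℝ (θ i - θ' j) (η i j ω) : ℝ) with hI'
    set E := ‖η i j ω‖^2 with hE'
    set s := Real.sqrt (σ^2 + σ'^2) with hs'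
    set z := Real.sqrt d * ζ2 ω with hz'
    have hA0 : 0 ≤ A := norm_nonneg _
    have hA : κbar * s ≤ A := by
      have h := hκle i j hij
      rw [le_div_iff₀ hs] at h
      exact h
    have hI : -(ζ1 ω * A) ≤ I := (abs_le.mp (hζ1b i j hij)).1
    have hEl : (d:ℝ) - z ≤ E := by
      have := (abs_le.mp (hE i j)).1
      linarith
    have hζ1' : 8 * ζ1 ω ≤ κbar := hΩ0.1
    have hz : 4 * z ≤ κbar^2 := by rw [hz']; linarith [hΩ0.2]
    have p1 : κbar * s * A ≤ A^2 := by
      nlinarith [mul_le_mul_of_nonneg_right hA hA0]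
    have p2 : κbar^2 * s^2 ≤ A^2 := by
      nlinarith [mul_le_mul_of_nonneg_right hA (mul_nonneg hκ0 hs.le),
        mul_le_mul_of_nonneg_right hA hA0]
    have p3 : 2 * s * (ζ1 ω) * A ≤ κbar * s * A / 4 := by
      nlinarith [mul_le_mul_of_nonneg_right hζ1' (mul_nonneg hs.le hA0)]
    have p4 : 2 * z * s^2 ≤ κbar^2 * s^2 / 2 := by
      nlinarith [mul_le_mul_of_nonneg_right hz (sq_nonneg s)]
    have key : 2 * z * s^2 ≤ A^2 - 2 * s * (ζ1 ω) * A := by linarith [p1, p2, p3, p4, sq_nonneg A]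
    have q1 : -(2 * s * (ζ1 ω) * A) ≤ 2 * s * I := by
      nlinarith [mul_le_mul_of_nonneg_left hI (by positivity : (0:ℝ) ≤ 2 * s)]
    have q2 : ((d:ℝ) - z) * (σ^2 + σ'^2) ≤ (σ^2 + σ'^2) * E := by
      nlinarith [mul_le_mul_of_nonneg_left hEl hs2.le]
    calc ((d:ℝ) + z) * (σ^2 + σ'^2)
        = ((d:ℝ) - z) * (σ^2 + σ'^2) + 2 * z * s^2 := by rw [hss]; ring
      _ ≤ ((d:ℝ) - z) * (σ^2 + σ'^2) + (A^2 - 2 * s * (ζ1 ω) * A) := by linarith [key]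
      _ ≤ A^2 + 2 * s * I + (σ^2 + σ'^2) * E := by linarith [q1, q2]
  -- finiteness / nonemptiness of the Lhat sets
  have hfinA : ∀ K : ℕ, {r : ℝ | ∃ (S : Finset (Fin n)) (π : Fin n → Fin m),
      S.card = K ∧ Set.InjOn π ↑S ∧
      r = (∑ i ∈ S, ‖X i ω - X' (π i) ω‖^2) / (σ^2 + σ'^2)}.Finite := by
    intro K
    apply Set.Finite.subset (Set.finite_range (fun p : Finset (Fin n) × (Fin n → Fin m) =>
      (∑ i ∈ p.1, ‖X i ω - X' (p.2 i) ω‖^2) / (σ^2 + σ'^2)))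
    rintro r ⟨S, π, _, _, rfl⟩
    exact ⟨(S, π), rfl⟩
  have hneA : Set.Nonempty {r : ℝ | ∃ (S : Finset (Fin n)) (π : Fin n → Fin m),
      S.card = k ∧ Set.InjOn π ↑S ∧
      r = (∑ i ∈ S, ‖X i ω - X' (π i) ω‖^2) / (σ^2 + σ'^2)} := by
    obtain ⟨S0, hsub, hcard0⟩ := Finset.exists_subset_card_eq (s := Sstar) (n := k) (by rw [hkstar]; exact hk2.le)
    exact ⟨_, S0, πstar, hcard0, hπstar.mono (Finset.coe_subset.mpr hsub), rfl⟩
  obtain ⟨S, π, hScard, hSinj, hSval⟩ : ∃ (S : Finset (Fin n)) (π : Fin n → Fin m),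
      S.card = k ∧ Set.InjOn π ↑S ∧
      Lhat k ω = (∑ i ∈ S, ‖X i ω - X' (π i) ω‖^2) / (σ^2 + σ'^2) := by
    have hm := Set.Nonempty.csInf_mem hneA (hfinA k)
    obtain ⟨S, π, h1, h2, h3⟩ := hm
    exact ⟨S, π, h1, h2, by rw [hLhat k ω]; exact h3⟩
  obtain ⟨S', π', hc', hinj', hsum'⟩ := aux_comb Sstar πstar hπstar c
      ((d:ℝ) + Real.sqrt d * ζ2 ω) htrue hwrongc
      ((S \ Sstar).card + (S.filter (fun i => i ∈ Sstar ∧ π i ≠ πstar i)).card) S π le_rfl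
      (by rw [hScard, hkstar]; exact hk2) hSinj
  have hub : Lhat (k + 1) ω ≤ ∑ i ∈ S', c i (π' i) := by
    rw [hLhat (k + 1) ω]
    apply csInf_le (hfinA (k + 1)).bddBelow
    refine ⟨S', π', by rw [hc', hScard], hinj', ?_⟩
    rw [Finset.sum_div]
  have hlb : ∑ i ∈ S, c i (π i) = Lhat k ω := by rw [hSval, Finset.sum_div]
  linarith [hsum', hub, hlb]
end

section
/- Relative increment bound below k* (intermediate step in the proof of Theorem 1): Pointwise on the event Ω0 = {8ζ1 ≤ κ̄_all and 4√d·ζ2 ≤ κ̄_all²}, for every k with 1 ≤ k < k*, if moreover √d·ζ2 < d, then Φ̂(k+1) − Φ̂(k) ≤ Φ̂(k)·(d + √d·ζ2)/(k·(d − √d·ζ2)). -/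
open MeasureTheory ProbabilityTheory

set_option linter.unusedVariables false
set_option maxHeartbeats 2000000

lemma aux_extend {n m : ℕ} (D : Fin n → Fin m → ℝ) (A : ℝ)
    (Sstar : Finset (Fin n)) (πstar : Fin n → Fin m)
    (hπstar : Set.InjOn πstar ↑Sstar)
    (htrue : ∀ i ∈ Sstar, D i (πstar i) ≤ A)
    (hlow : ∀ i j, ¬(i ∈ Sstar ∧ j = πstar i) → A ≤ D i j) :
    ∀ t : ℕ, ∀ S : Finset (Fin n), ∀ π : Fin n → Fin m,
      (S.filter (fun i => ¬(i ∈ Sstar ∧ π i = πstar i))).card ≤ t →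
      Set.InjOn π ↑S → S.card < Sstar.card →
      ∃ S' : Finset (Fin n), ∃ π' : Fin n → Fin m,
        S'.card = S.card + 1 ∧ Set.InjOn π' ↑S' ∧
        ∑ i ∈ S', D i (π' i) ≤ (∑ i ∈ S, D i (π i)) + A := by
  classical
  intro t
  induction t using Nat.strong_induction_on with
  | _ t ih =>
    intro S π hmeas hinj hcard
    -- pick i₀ ∈ Sstar \ S
    have hex : ∃ i₀, i₀ ∈ Sstar ∧ i₀ ∉ S := by
      by_contra h
      push_neg at h
      have hsub : Sstar ⊆ S := fun x hx => h x hx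
      exact absurd (Finset.card_le_card hsub) (by omega)
    obtain ⟨i₀, hi₀s, hi₀ns⟩ := hex
    by_cases hcase : ∃ i₁ ∈ S, π i₁ = πstar i₀
    · -- swap case
      obtain ⟨i₁, hi₁S, hi₁π⟩ := hcase
      have hi₁nt : ¬(i₁ ∈ Sstar ∧ π i₁ = πstar i₁) := by
        rintro ⟨h₁, h₂⟩
        have : i₁ = i₀ := hπstar h₁ hi₀s (by rw [← h₂, hi₁π])
        exact hi₀ns (this ▸ hi₁S)
      have hi₁f : i₁ ∈ S.filter (fun i => ¬(i ∈ Sstar ∧ π i = πstar i)) :=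
        Finset.mem_filter.mpr ⟨hi₁S, hi₁nt⟩
      have hfpos : 1 ≤ (S.filter (fun i => ¬(i ∈ Sstar ∧ π i = πstar i))).card :=
        Finset.card_pos.mpr ⟨i₁, hi₁f⟩
      set S₂ : Finset (Fin n) := insert i₀ (S.erase i₁) with hS₂
      set π₂ : Fin n → Fin m := Function.update π i₀ (πstar i₀) with hπ₂
      have hi₀ne : i₀ ∉ S.erase i₁ := fun h => hi₀ns (Finset.mem_of_mem_erase h)
      have hS₂card : S₂.card = S.card := by
        rw [hS₂, Finset.card_insert_of_notMem hi₀ne, Finset.card_erase_of_mem hi₁S]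
        have : 1 ≤ S.card := Finset.card_pos.mpr ⟨i₁, hi₁S⟩
        omega
      have hπ₂eq : ∀ i ∈ S.erase i₁, π₂ i = π i := by
        intro i hi
        have : i ≠ i₀ := fun h => hi₀ne (h ▸ hi)
        simp [hπ₂, Function.update_of_ne this]
      have hπ₂i₀ : π₂ i₀ = πstar i₀ := by
        rw [hπ₂]; exact Function.update_self _ _ _
      have hinj₂ : Set.InjOn π₂ ↑S₂ := by
        intro a ha b hb hab
        simp only [hS₂, Finset.coe_insert, Set.mem_insert_iff, Finset.mem_coe] at ha hb
        rcases ha with ha | ha <;> rcases hb with hb | hb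
        · rw [ha, hb]
        · exfalso
          rw [ha] at hab
          rw [hπ₂i₀, hπ₂eq b hb, ← hi₁π] at hab
          have hbS : b ∈ S := Finset.mem_of_mem_erase hb
          have : i₁ = b := hinj hi₁S hbS hab
          exact (Finset.ne_of_mem_erase hb) this.symm
        · exfalso
          rw [hb] at hab
          rw [hπ₂i₀, hπ₂eq a ha, ← hi₁π] at hab
          have haS : a ∈ S := Finset.mem_of_mem_erase ha
          have : a = i₁ := hinj haS hi₁S hab
          exact (Finset.ne_of_mem_erase ha) this
        · rw [hπ₂eq a ha, hπ₂eq b hb] at hab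
          exact hinj (Finset.mem_of_mem_erase ha) (Finset.mem_of_mem_erase hb) hab
      have hsum₂ : ∑ i ∈ S₂, D i (π₂ i) ≤ ∑ i ∈ S, D i (π i) := by
        rw [hS₂, Finset.sum_insert hi₀ne]
        have h1 : ∑ i ∈ S.erase i₁, D i (π₂ i) = ∑ i ∈ S.erase i₁, D i (π i) :=
          Finset.sum_congr rfl (fun i hi => by rw [hπ₂eq i hi])
        have h2 : ∑ i ∈ S.erase i₁, D i (π i) + D i₁ (π i₁) = ∑ i ∈ S, D i (π i) :=
          Finset.sum_erase_add _ _ hi₁S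
        have h3 : D i₀ (π₂ i₀) ≤ A := by
          rw [hπ₂i₀]; exact htrue i₀ hi₀s
        have h4 : A ≤ D i₁ (π i₁) := hlow i₁ (π i₁) hi₁nt
        linarith [h1, h2, h3, h4]
      have hmeas₂ : (S₂.filter (fun i => ¬(i ∈ Sstar ∧ π₂ i = πstar i))).card ≤ t - 1 := by
        have hfe : S₂.filter (fun i => ¬(i ∈ Sstar ∧ π₂ i = πstar i)) =
            (S.erase i₁).filter (fun i => ¬(i ∈ Sstar ∧ π i = πstar i)) := by
          rw [hS₂, Finset.filter_insert]
          rw [if_neg (by simp [hπ₂, Function.update_self, hi₀s])]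
          exact Finset.filter_congr (fun i hi => by rw [hπ₂eq i hi])
        rw [hfe, Finset.filter_erase, Finset.card_erase_of_mem hi₁f]
        omega
      have ht1 : t - 1 < t := by omega
      obtain ⟨S', π', h1, h2, h3⟩ := ih (t - 1) ht1 S₂ π₂ hmeas₂ hinj₂ (by omega)
      exact ⟨S', π', by omega, h2, le_trans h3 (by linarith)⟩
    · -- extend case
      push_neg at hcase
      refine ⟨insert i₀ S, Function.update π i₀ (πstar i₀),
        Finset.card_insert_of_notMem hi₀ns, ?_, ?_⟩
      · intro a ha b hb hab
        simp only [Finset.coe_insert, Set.mem_insert_iff, Finset.mem_coe] at ha hb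
        rcases ha with ha | ha <;> rcases hb with hb | hb
        · rw [ha, hb]
        · exfalso
          have hbne : b ≠ i₀ := fun h => hi₀ns (h ▸ hb)
          rw [ha, Function.update_self, Function.update_of_ne hbne] at hab
          exact hcase b hb hab.symm
        · exfalso
          have hane : a ≠ i₀ := fun h => hi₀ns (h ▸ ha)
          rw [hb, Function.update_self, Function.update_of_ne hane] at hab
          exact hcase a ha hab
        · have hane : a ≠ i₀ := fun h => hi₀ns (h ▸ ha)
          have hbne : b ≠ i₀ := fun h => hi₀ns (h ▸ hb)
          rw [Function.update_of_ne hane, Function.update_of_ne hbne] at hab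
          exact hinj ha hb hab
      · rw [Finset.sum_insert hi₀ns, Function.update_self]
        have h1 : ∑ i ∈ S, D i (Function.update π i₀ (πstar i₀) i) = ∑ i ∈ S, D i (π i) :=
          Finset.sum_congr rfl (fun i hi => by
            rw [Function.update_of_ne (fun h => hi₀ns (by rw [← h]; exact hi))])
        have := htrue i₀ hi₀s
        linarith [h1]

theorem stmt_12
    {d n m kstar : ℕ}
    (hd : 1 ≤ d) (hn : 2 ≤ n) (hnm : n ≤ m)
    {Ω : Type*} [MeasurableSpace Ω] (P : Measure Ω) [IsProbabilityMeasure P]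
    (θ : Fin n → EuclideanSpace ℝ (Fin d)) (θ' : Fin m → EuclideanSpace ℝ (Fin d))
    (σ σ' : ℝ) (hσ : 0 < σ) (hσ' : 0 < σ')
    (ξ : (Fin n ⊕ Fin m) × Fin d → Ω → ℝ)
    (hmeas : ∀ p, Measurable (ξ p))
    (hindep : iIndepFun ξ P)
    (hgauss : ∀ p, P.map (ξ p) = gaussianReal 0 1)
    (Sstar : Finset (Fin n)) (hkstar : Sstar.card = kstar)
    (πstar : Fin n → Fin m) (hπstar : Set.InjOn πstar ↑Sstar)
    (hmatch : ∀ i ∈ Sstar, θ i = θ' (πstar i))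
    (X : Fin n → Ω → EuclideanSpace ℝ (Fin d))
    (X' : Fin m → Ω → EuclideanSpace ℝ (Fin d))
    (hX : ∀ i ω t, X i ω t = θ i t + σ * ξ (Sum.inl i, t) ω)
    (hX' : ∀ j ω t, X' j ω t = θ' j t + σ' * ξ (Sum.inr j, t) ω)
    (η : Fin n → Fin m → Ω → EuclideanSpace ℝ (Fin d))
    (hη : ∀ i j ω t, η i j ω t =
      (σ * ξ (Sum.inl i, t) ω - σ' * ξ (Sum.inr j, t) ω) / Real.sqrt (σ^2 + σ'^2))
    (κbar : ℝ)
    (hκbar : κbar = sInf {r : ℝ | ∃ i j, ¬(i ∈ Sstar ∧ j = πstar i) ∧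
        r = ‖θ i - θ' j‖ / Real.sqrt (σ^2 + σ'^2)})
    (ζ1 ζ2 : Ω → ℝ)
    (hζ1 : ∀ ω, ζ1 ω = sSup {r : ℝ | ∃ i j, ¬(i ∈ Sstar ∧ j = πstar i) ∧
        r = abs ((inner ℝ (θ i - θ' j) (η i j ω) : ℝ)) / ‖θ i - θ' j‖})
    (hζ2 : ∀ ω, ζ2 ω = (Real.sqrt d)⁻¹ * sSup {r : ℝ | ∃ i j, r = abs (‖η i j ω‖^2 - (d:ℝ))})
    (Φhat : ℕ → Ω → ℝ)
    (hΦhat : ∀ k ω, Φhat k ω = sInf {r : ℝ | ∃ (S : Finset (Fin n)) (π : Fin n → Fin m),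
        S.card = k ∧ Set.InjOn π ↑S ∧ r = ∑ i ∈ S, ‖X i ω - X' (π i) ω‖^2})
    (Lhat : ℕ → Ω → ℝ)
    (hLhat : ∀ k ω, Lhat k ω = sInf {r : ℝ | ∃ (S : Finset (Fin n)) (π : Fin n → Fin m),
        S.card = k ∧ Set.InjOn π ↑S ∧ r = (∑ i ∈ S, ‖X i ω - X' (π i) ω‖^2) / (σ^2 + σ'^2)})
    (k : ℕ) (hk1 : 1 ≤ k) (hk2 : k < kstar)
    (ω : Ω)
    (hΩ0 : 8 * ζ1 ω ≤ κbar ∧ 4 * Real.sqrt d * ζ2 ω ≤ κbar^2)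
    (hζ2d : Real.sqrt d * ζ2 ω < (d : ℝ)) :
    Φhat (k + 1) ω - Φhat k ω ≤
      Φhat k ω * ((d : ℝ) + Real.sqrt d * ζ2 ω) / ((k : ℝ) * ((d : ℝ) - Real.sqrt d * ζ2 ω)) := by
  classical
  obtain ⟨h81, h42⟩ := hΩ0
  set σ0 : ℝ := Real.sqrt (σ^2 + σ'^2) with hσ0
  have hs2 : (0:ℝ) < σ^2 + σ'^2 := by positivity
  have hσ0pos : 0 < σ0 := Real.sqrt_pos.mpr hs2
  have hσ0sq : σ0^2 = σ^2 + σ'^2 := Real.sq_sqrt hs2.le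
  have hd1 : (1:ℝ) ≤ (d:ℝ) := by exact_mod_cast hd
  have hsd : (0:ℝ) < Real.sqrt d := Real.sqrt_pos.mpr (by linarith)
  set u : ℝ := Real.sqrt d * ζ2 ω with hu
  -- the vector decomposition
  have hXX : ∀ i j, X i ω - X' j ω = (θ i - θ' j) + σ0 • η i j ω := by
    intro i j
    ext t
    have h1 : (X i ω - X' j ω) t = X i ω t - X' j ω t := rfl
    have h2 : ((θ i - θ' j) + σ0 • η i j ω) t = (θ i t - θ' j t) + σ0 * η i j ω t := rfl
    rw [h1, h2, hX, hX', hη]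
    field_simp
    ring
  have hD : ∀ i j, ‖X i ω - X' j ω‖^2 =
      ‖θ i - θ' j‖^2 + 2*σ0*(inner ℝ (θ i - θ' j) (η i j ω) : ℝ) + σ0^2 * ‖η i j ω‖^2 := by
    intro i j
    rw [hXX, norm_add_sq_real, real_inner_smul_right, norm_smul, mul_pow, Real.norm_eq_abs,
      sq_abs]
    ring
  -- bound on ‖η‖²
  have hη2 : ∀ i j, |‖η i j ω‖^2 - (d:ℝ)| ≤ u := by
    have hfin : {r : ℝ | ∃ i j, r = |‖η i j ω‖^2 - (d:ℝ)|}.Finite := by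
      apply (Set.finite_range fun p : Fin n × Fin m => |‖η p.1 p.2 ω‖^2 - (d:ℝ)|).subset
      rintro r ⟨i, j, rfl⟩
      exact ⟨(i, j), rfl⟩
    intro i j
    have hle : |‖η i j ω‖^2 - (d:ℝ)| ≤ sSup {r : ℝ | ∃ i j, r = |‖η i j ω‖^2 - (d:ℝ)|} :=
      le_csSup hfin.bddAbove ⟨i, j, rfl⟩
    have : u = sSup {r : ℝ | ∃ i j, r = |‖η i j ω‖^2 - (d:ℝ)|} := by
      rw [hu, hζ2 ω]
      field_simp
    linarith [this ▸ hle]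
  have hu0 : 0 ≤ u := le_trans (abs_nonneg _) (hη2 ⟨0, by omega⟩ ⟨0, by omega⟩)
  -- a non-true pair exists
  have hnt : ∃ i j, ¬(i ∈ Sstar ∧ j = πstar i) := by
    refine ⟨⟨0, by omega⟩, ?_⟩
    rcases Finset.exists_mem_ne (s := (Finset.univ : Finset (Fin m)))
      (by simp; omega) (πstar ⟨0, by omega⟩) with ⟨j, _, hj⟩
    exact ⟨j, fun h => hj h.2⟩
  -- ζ1 bounds
  have hfin1 : {r : ℝ | ∃ i j, ¬(i ∈ Sstar ∧ j = πstar i) ∧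
      r = |(inner ℝ (θ i - θ' j) (η i j ω) : ℝ)| / ‖θ i - θ' j‖}.Finite := by
    apply (Set.finite_range fun p : Fin n × Fin m =>
      |(inner ℝ (θ p.1 - θ' p.2) (η p.1 p.2 ω) : ℝ)| / ‖θ p.1 - θ' p.2‖).subset
    rintro r ⟨i, j, _, rfl⟩
    exact ⟨(i, j), rfl⟩
  have hζ1nn : 0 ≤ ζ1 ω := by
    obtain ⟨i, j, hij⟩ := hnt
    rw [hζ1 ω]
    refine le_trans ?_ (le_csSup hfin1.bddAbove ⟨i, j, hij, rfl⟩)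
    positivity
  have hinner : ∀ i j, ¬(i ∈ Sstar ∧ j = πstar i) →
      |(inner ℝ (θ i - θ' j) (η i j ω) : ℝ)| ≤ ‖θ i - θ' j‖ * ζ1 ω := by
    intro i j hij
    have hle : |(inner ℝ (θ i - θ' j) (η i j ω) : ℝ)| / ‖θ i - θ' j‖ ≤ ζ1 ω := by
      rw [hζ1 ω]
      exact le_csSup hfin1.bddAbove ⟨i, j, hij, rfl⟩
    rcases eq_or_lt_of_le (norm_nonneg (θ i - θ' j)) with h0 | h0
    · have : θ i - θ' j = 0 := by rw [← norm_eq_zero]; exact h0.symm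
      simp [this]
    · rw [div_le_iff₀ h0] at hle
      linarith [hle]
  -- κbar bounds
  have hfin0 : {r : ℝ | ∃ i j, ¬(i ∈ Sstar ∧ j = πstar i) ∧
      r = ‖θ i - θ' j‖ / Real.sqrt (σ^2 + σ'^2)}.Finite := by
    apply (Set.finite_range fun p : Fin n × Fin m =>
      ‖θ p.1 - θ' p.2‖ / Real.sqrt (σ^2 + σ'^2)).subset
    rintro r ⟨i, j, _, rfl⟩
    exact ⟨(i, j), rfl⟩
  have hκ : ∀ i j, ¬(i ∈ Sstar ∧ j = πstar i) → κbar * σ0 ≤ ‖θ i - θ' j‖ := by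
    intro i j hij
    have hle : κbar ≤ ‖θ i - θ' j‖ / σ0 := by
      rw [hκbar]
      exact csInf_le hfin0.bddBelow ⟨i, j, hij, rfl⟩
    rw [le_div_iff₀ hσ0pos] at hle
    linarith
  have hκ0 : 0 ≤ κbar := by
    rw [hκbar]
    obtain ⟨i, j, hij⟩ := hnt
    refine le_csInf ⟨_, i, j, hij, rfl⟩ ?_
    rintro r ⟨i, j, _, rfl⟩
    positivity
  -- the cost bounds
  have hAle : ∀ i j, ¬(i ∈ Sstar ∧ j = πstar i) →
      σ0^2*((d:ℝ)+u) ≤ ‖X i ω - X' j ω‖^2 := by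
    intro i j hij
    rw [hD]
    set c : ℝ := ‖θ i - θ' j‖ with hc
    set inn : ℝ := (inner ℝ (θ i - θ' j) (η i j ω) : ℝ) with hinn
    have hin := hinner i j hij
    have hη2' : (d:ℝ) - u ≤ ‖η i j ω‖^2 := by linarith [(abs_le.mp (hη2 i j)).1]
    have h42' : 4*u ≤ κbar^2 := by nlinarith [h42]
    have hcn : (0:ℝ) ≤ c := norm_nonneg _
    have h1 : σ0 * κbar ≤ c := by have := hκ i j hij; linarith
    have h2 : -(c * ζ1 ω) ≤ inn := neg_le_of_abs_le hin
    have e1 : 8*(σ0*(c*ζ1 ω)) ≤ σ0*(c*κbar) := by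
      nlinarith [mul_le_mul_of_nonneg_left h81 (mul_nonneg hσ0pos.le hcn)]
    have e2 : σ0*(c*κbar) ≤ c*c := by
      nlinarith [mul_le_mul_of_nonneg_left h1 hcn]
    have e3 : σ0^2*κbar^2 ≤ c*c := by
      nlinarith [h1, mul_nonneg hσ0pos.le hκ0]
    have e4 : 4*(σ0^2*u) ≤ σ0^2*κbar^2 := by nlinarith [h42', sq_nonneg σ0]
    have e5 : -(2*σ0*(c*ζ1 ω)) ≤ 2*σ0*inn := by
      nlinarith [mul_le_mul_of_nonneg_left h2 (by positivity : (0:ℝ) ≤ 2*σ0)]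
    have e6 : σ0^2*((d:ℝ)-u) ≤ σ0^2*‖η i j ω‖^2 :=
      mul_le_mul_of_nonneg_left hη2' (sq_nonneg σ0)
    nlinarith [e1, e2, e3, e4, e5, e6]
  have hBle : ∀ i j, σ0^2*((d:ℝ)-u) ≤ ‖X i ω - X' j ω‖^2 := by
    intro i j
    by_cases hij : i ∈ Sstar ∧ j = πstar i
    · rw [hD]
      have hθ : θ i - θ' j = 0 := by rw [hij.2, ← hmatch i hij.1, sub_self]
      rw [hθ]
      simp only [norm_zero, inner_zero_left]
      have hη2' : (d:ℝ) - u ≤ ‖η i j ω‖^2 := by linarith [(abs_le.mp (hη2 i j)).1]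
      nlinarith [sq_nonneg σ0]
    · refine le_trans ?_ (hAle i j hij)
      nlinarith [sq_nonneg σ0]
  have hAub : ∀ i ∈ Sstar, ‖X i ω - X' (πstar i) ω‖^2 ≤ σ0^2*((d:ℝ)+u) := by
    intro i hi
    rw [hD]
    have hθ : θ i - θ' (πstar i) = 0 := by rw [← hmatch i hi, sub_self]
    rw [hθ]
    simp only [norm_zero, inner_zero_left]
    have hη2' : ‖η i (πstar i) ω‖^2 ≤ (d:ℝ) + u := by
      linarith [(abs_le.mp (hη2 i (πstar i))).2]
    nlinarith [sq_nonneg σ0]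
  -- the matching sets
  set Mset : ℕ → Set ℝ := fun j => {r : ℝ | ∃ (S : Finset (Fin n)) (π : Fin n → Fin m),
      S.card = j ∧ Set.InjOn π ↑S ∧ r = ∑ i ∈ S, ‖X i ω - X' (π i) ω‖^2} with hMset
  have hfinM : ∀ j, (Mset j).Finite := by
    intro j
    apply (Set.finite_range fun p : Finset (Fin n) × (Fin n → Fin m) =>
      ∑ i ∈ p.1, ‖X i ω - X' (p.2 i) ω‖^2).subset
    rintro r ⟨S, π, _, _, rfl⟩
    exact ⟨(S, π), rfl⟩
  have hneM : ∀ j, j ≤ kstar → (Mset j).Nonempty := by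
    intro j hj
    obtain ⟨T, hTsub, hTcard⟩ := Finset.exists_subset_card_eq (s := Sstar) (n := j) (by rw [hkstar]; exact hj)
    exact ⟨∑ i ∈ T, ‖X i ω - X' (πstar i) ω‖^2, T, πstar, hTcard,
      hπstar.mono (by exact_mod_cast hTsub), rfl⟩
  have hbddM : ∀ j, BddBelow (Mset j) := by
    intro j
    refine ⟨0, ?_⟩
    rintro r ⟨S, π, _, _, rfl⟩
    exact Finset.sum_nonneg fun i _ => sq_nonneg _
  -- Φhat k is attained
  have hΦmem : Φhat k ω ∈ Mset k := by
    rw [hΦhat]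
    exact (hneM k hk2.le).csInf_mem (hfinM k)
  obtain ⟨S, π, hScard, hSinj, hSsum⟩ := hΦmem
  have hcardlt : S.card < Sstar.card := by rw [hScard, hkstar]; exact hk2
  obtain ⟨S', π', hcard', hinj', hsum'⟩ := aux_extend (fun i j => ‖X i ω - X' j ω‖^2) (σ0^2*((d:ℝ)+u)) Sstar πstar hπstar
    hAub hAle (S.filter (fun i => ¬(i ∈ Sstar ∧ π i = πstar i))).card S π le_rfl hSinj hcardlt
  have hΦk1 : Φhat (k+1) ω ≤ Φhat k ω + σ0^2*((d:ℝ)+u) := by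
    rw [hΦhat]
    refine le_trans (csInf_le (hbddM (k+1)) ⟨S', π', by omega, hinj', rfl⟩) ?_
    rw [hSsum]
    exact hsum'
  have hΦkge : (k:ℝ) * (σ0^2*((d:ℝ)-u)) ≤ Φhat k ω := by
    rw [hΦhat]
    refine le_csInf (hneM k hk2.le) ?_
    rintro r ⟨T, ρ, hTcard, _, rfl⟩
    have := Finset.card_nsmul_le_sum T (fun i => ‖X i ω - X' (ρ i) ω‖^2) (σ0^2*((d:ℝ)-u))
      (fun i _ => hBle i (ρ i))
    rw [hTcard, nsmul_eq_mul] at this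
    exact this
  -- final arithmetic
  have hkR : (1:ℝ) ≤ (k:ℝ) := by exact_mod_cast hk1
  have hdu : 0 < (d:ℝ) - u := by rw [hu]; linarith [hζ2d]
  have hmain : σ0^2*((d:ℝ)+u) ≤ Φhat k ω * ((d:ℝ) + u) / ((k:ℝ) * ((d:ℝ) - u)) := by
    rw [le_div_iff₀ (by positivity)]
    nlinarith [mul_le_mul_of_nonneg_right hΦkge (by linarith : (0:ℝ) ≤ (d:ℝ)+u)]
  rw [hu] at hΦk1 hmain
  linarith
end

section
/- Relative increment bound at k* (intermediate step in the proof of Theorem 1): Assume k* + 1 ≤ min(n,m). Pointwise on the event Ω0 = {8ζ1 ≤ κ̄_all and 4√d·ζ2 ≤ κ̄_all²}, one has Φ̂(k*+1) − Φ̂(k*) ≥ Φ̂(k*)·(κ̄_all² − 2·ζ1·κ̄_all + d − √d·ζ2)/(k*·(d + √d·ζ2)). -/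
open MeasureTheory ProbabilityTheory

set_option linter.unusedVariables false
set_option maxHeartbeats 1000000

lemma finite_of_range {α : Type*} [Finite α] (f : α → ℝ) {s : Set ℝ}
    (h : s ⊆ Set.range f) : s.Finite := (Set.finite_range f).subset h

theorem stmt_13
    {d n m kstar : ℕ}
    (hd : 1 ≤ d) (hn : 2 ≤ n) (hnm : n ≤ m)
    {Ω : Type*} [MeasurableSpace Ω] (P : Measure Ω) [IsProbabilityMeasure P]
    (θ : Fin n → EuclideanSpace ℝ (Fin d)) (θ' : Fin m → EuclideanSpace ℝ (Fin d))
    (σ σ' : ℝ) (hσ : 0 < σ) (hσ' : 0 < σ')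
    (ξ : (Fin n ⊕ Fin m) × Fin d → Ω → ℝ)
    (hmeas : ∀ p, Measurable (ξ p))
    (hindep : iIndepFun ξ P)
    (hgauss : ∀ p, P.map (ξ p) = gaussianReal 0 1)
    (Sstar : Finset (Fin n)) (hkstar : Sstar.card = kstar)
    (πstar : Fin n → Fin m) (hπstar : Set.InjOn πstar ↑Sstar)
    (hmatch : ∀ i ∈ Sstar, θ i = θ' (πstar i))
    (X : Fin n → Ω → EuclideanSpace ℝ (Fin d))
    (X' : Fin m → Ω → EuclideanSpace ℝ (Fin d))
    (hX : ∀ i ω t, X i ω t = θ i t + σ * ξ (Sum.inl i, t) ω)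
    (hX' : ∀ j ω t, X' j ω t = θ' j t + σ' * ξ (Sum.inr j, t) ω)
    (η : Fin n → Fin m → Ω → EuclideanSpace ℝ (Fin d))
    (hη : ∀ i j ω t, η i j ω t =
      (σ * ξ (Sum.inl i, t) ω - σ' * ξ (Sum.inr j, t) ω) / Real.sqrt (σ^2 + σ'^2))
    (κbar : ℝ)
    (hκbar : κbar = sInf {r : ℝ | ∃ i j, ¬(i ∈ Sstar ∧ j = πstar i) ∧
        r = ‖θ i - θ' j‖ / Real.sqrt (σ^2 + σ'^2)})
    (ζ1 ζ2 : Ω → ℝ)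
    (hζ1 : ∀ ω, ζ1 ω = sSup {r : ℝ | ∃ i j, ¬(i ∈ Sstar ∧ j = πstar i) ∧
        r = abs ((inner ℝ (θ i - θ' j) (η i j ω) : ℝ)) / ‖θ i - θ' j‖})
    (hζ2 : ∀ ω, ζ2 ω = (Real.sqrt d)⁻¹ * sSup {r : ℝ | ∃ i j, r = abs (‖η i j ω‖^2 - (d:ℝ))})
    (Φhat : ℕ → Ω → ℝ)
    (hΦhat : ∀ k ω, Φhat k ω = sInf {r : ℝ | ∃ (S : Finset (Fin n)) (π : Fin n → Fin m),
        S.card = k ∧ Set.InjOn π ↑S ∧ r = ∑ i ∈ S, ‖X i ω - X' (π i) ω‖^2})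
    (Lhat : ℕ → Ω → ℝ)
    (hLhat : ∀ k ω, Lhat k ω = sInf {r : ℝ | ∃ (S : Finset (Fin n)) (π : Fin n → Fin m),
        S.card = k ∧ Set.InjOn π ↑S ∧ r = (∑ i ∈ S, ‖X i ω - X' (π i) ω‖^2) / (σ^2 + σ'^2)})
    (hk : kstar + 1 ≤ min n m)
    (ω : Ω)
    (hΩ0 : 8 * ζ1 ω ≤ κbar ∧ 4 * Real.sqrt d * ζ2 ω ≤ κbar^2) :
    Φhat (kstar + 1) ω - Φhat kstar ω ≥
      Φhat kstar ω * (κbar^2 - 2 * ζ1 ω * κbar + (d : ℝ) - Real.sqrt d * ζ2 ω)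
        / ((kstar : ℝ) * ((d : ℝ) + Real.sqrt d * ζ2 ω)) := by
  obtain ⟨hO1, hO2⟩ := hΩ0
  have hm : 2 ≤ m := le_trans hn hnm
  have hs0 : (0:ℝ) < σ^2 + σ'^2 := by positivity
  set σ0 : ℝ := Real.sqrt (σ^2 + σ'^2) with hσ0def
  have hσ0 : 0 < σ0 := Real.sqrt_pos.mpr hs0
  have hσ0sq : σ0^2 = σ^2 + σ'^2 := Real.sq_sqrt hs0.le
  have hdpos : (0:ℝ) < (d:ℝ) := by exact_mod_cast hd
  have hd1 : (1:ℝ) ≤ (d:ℝ) := by exact_mod_cast hd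
  have hsd : (0:ℝ) < Real.sqrt d := Real.sqrt_pos.mpr hdpos
  -- decomposition of the difference
  have hXX : ∀ i j, X i ω - X' j ω = (θ i - θ' j) + σ0 • η i j ω := by
    intro i j
    ext t
    simp only [PiLp.sub_apply, PiLp.add_apply, PiLp.smul_apply, smul_eq_mul]
    rw [hX, hX', hη]
    field_simp
    ring
  have hnormsq : ∀ i j, ‖X i ω - X' j ω‖^2
      = ‖θ i - θ' j‖^2 + 2*σ0*(inner ℝ (θ i - θ' j) (η i j ω) : ℝ)
        + (σ^2+σ'^2)*‖η i j ω‖^2 := by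
    intro i j
    rw [hXX i j, norm_add_sq_real, real_inner_smul_right, norm_smul, mul_pow,
      Real.norm_eq_abs, sq_abs, hσ0sq]
    ring
  -- canonical indices
  have hn0 : 0 < n := by omega
  have hm0 : 0 < m := by omega
  let i0 : Fin n := ⟨0, hn0⟩
  let j0 : Fin m := ⟨0, hm0⟩
  let j1 : Fin m := ⟨1, by omega⟩
  have hj01 : j0 ≠ j1 := by simp [j0, j1, Fin.ext_iff]
  let jb : Fin m := if πstar i0 = j0 then j1 else j0
  have hjb : jb ≠ πstar i0 := by
    by_cases h : πstar i0 = j0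
    · simp only [jb, if_pos h, h]
      exact fun he => hj01 he.symm
    · simp only [jb, if_neg h]
      exact fun he => h he.symm
  have hbad0 : ¬(i0 ∈ Sstar ∧ jb = πstar i0) := fun h => hjb h.2
  -- ζ2 bounds
  have hζ2fin : {r : ℝ | ∃ i j, r = |‖η i j ω‖^2 - (d:ℝ)|}.Finite := by
    apply finite_of_range (fun p : Fin n × Fin m => |‖η p.1 p.2 ω‖^2 - (d:ℝ)|)
    rintro r ⟨i, j, rfl⟩; exact ⟨(i, j), rfl⟩
  have hζ2set : ∀ i j, |‖η i j ω‖^2 - (d:ℝ)| ≤ Real.sqrt d * ζ2 ω := by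
    intro i j
    have hle : |‖η i j ω‖^2 - (d:ℝ)| ≤ sSup {r : ℝ | ∃ i j, r = |‖η i j ω‖^2 - (d:ℝ)|} :=
      le_csSup hζ2fin.bddAbove ⟨i, j, rfl⟩
    rw [hζ2 ω, ← mul_assoc, mul_inv_cancel₀ hsd.ne', one_mul]
    exact hle
  have hζ2nn : 0 ≤ ζ2 ω := by
    have := hζ2set i0 j0
    nlinarith [abs_nonneg (‖η i0 j0 ω‖^2 - (d:ℝ)), hsd]
  have hηub : ∀ i j, ‖η i j ω‖^2 ≤ (d:ℝ) + Real.sqrt d * ζ2 ω := by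
    intro i j; have := abs_le.mp (hζ2set i j); linarith [this.2]
  have hηlb : ∀ i j, (d:ℝ) - Real.sqrt d * ζ2 ω ≤ ‖η i j ω‖^2 := by
    intro i j; have := abs_le.mp (hζ2set i j); linarith [this.1]
  -- ζ1 bounds
  have hζ1fin : {r : ℝ | ∃ i j, ¬(i ∈ Sstar ∧ j = πstar i) ∧
      r = |(inner ℝ (θ i - θ' j) (η i j ω) : ℝ)| / ‖θ i - θ' j‖}.Finite := by
    apply finite_of_range (fun p : Fin n × Fin m =>
      |(inner ℝ (θ p.1 - θ' p.2) (η p.1 p.2 ω) : ℝ)| / ‖θ p.1 - θ' p.2‖)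
    rintro r ⟨i, j, _, rfl⟩; exact ⟨(i, j), rfl⟩
  have hζ1le : ∀ i j, ¬(i ∈ Sstar ∧ j = πstar i) →
      |(inner ℝ (θ i - θ' j) (η i j ω) : ℝ)| ≤ ζ1 ω * ‖θ i - θ' j‖ := by
    intro i j hbad
    have hmem : |(inner ℝ (θ i - θ' j) (η i j ω) : ℝ)| / ‖θ i - θ' j‖ ≤ ζ1 ω := by
      rw [hζ1 ω]; exact le_csSup hζ1fin.bddAbove ⟨i, j, hbad, rfl⟩
    rcases eq_or_lt_of_le (norm_nonneg (θ i - θ' j)) with h0 | h0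
    · have hz : θ i - θ' j = 0 := by rw [← norm_eq_zero]; exact h0.symm
      rw [hz]
      simp
    · exact (div_le_iff₀ h0).mp hmem
  have hζ1nn : 0 ≤ ζ1 ω := by
    have hmem : |(inner ℝ (θ i0 - θ' jb) (η i0 jb ω) : ℝ)| / ‖θ i0 - θ' jb‖ ≤ ζ1 ω := by
      rw [hζ1 ω]; exact le_csSup hζ1fin.bddAbove ⟨i0, jb, hbad0, rfl⟩
    have : 0 ≤ |(inner ℝ (θ i0 - θ' jb) (η i0 jb ω) : ℝ)| / ‖θ i0 - θ' jb‖ :=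
      div_nonneg (abs_nonneg _) (norm_nonneg _)
    linarith
  -- κbar bounds
  have hκfin : {r : ℝ | ∃ i j, ¬(i ∈ Sstar ∧ j = πstar i) ∧ r = ‖θ i - θ' j‖ / σ0}.Finite := by
    apply finite_of_range (fun p : Fin n × Fin m => ‖θ p.1 - θ' p.2‖ / σ0)
    rintro r ⟨i, j, _, rfl⟩; exact ⟨(i, j), rfl⟩
  have hκle : ∀ i j, ¬(i ∈ Sstar ∧ j = πstar i) → σ0 * κbar ≤ ‖θ i - θ' j‖ := by
    intro i j hbad
    have : κbar ≤ ‖θ i - θ' j‖ / σ0 := by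
      rw [hκbar]; exact csInf_le hκfin.bddBelow ⟨i, j, hbad, rfl⟩
    rw [le_div_iff₀ hσ0] at this
    linarith
  have hκnn : 0 ≤ κbar := by
    rw [hκbar]
    refine le_csInf ⟨‖θ i0 - θ' jb‖ / σ0, ⟨i0, jb, hbad0, rfl⟩⟩ ?_
    rintro r ⟨i, j, -, rfl⟩
    positivity
  -- abbreviations
  set A : ℝ := κbar^2 - 2 * ζ1 ω * κbar + (d:ℝ) - Real.sqrt d * ζ2 ω with hAdef
  set B : ℝ := (d:ℝ) + Real.sqrt d * ζ2 ω with hBdef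
  clear_value A B
  have hApos : 0 ≤ A := by
    have h1 : 2 * ζ1 ω * κbar ≤ κbar^2 / 4 := by nlinarith [mul_le_mul_of_nonneg_right hO1 hκnn]
    have h2 : Real.sqrt d * ζ2 ω ≤ κbar^2 / 4 := by linarith
    rw [hAdef]; nlinarith
  have hBpos : 0 < B := by
    rw [hBdef]; nlinarith [mul_nonneg hsd.le hζ2nn]
  -- the lower bound for bad pairs
  have hbadlb : ∀ i j, ¬(i ∈ Sstar ∧ j = πstar i) → (σ^2+σ'^2) * A ≤ ‖X i ω - X' j ω‖^2 := by
    intro i j hbad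
    rw [hnormsq]
    have h1 : σ0 * κbar ≤ ‖θ i - θ' j‖ := hκle i j hbad
    have h2 : |(inner ℝ (θ i - θ' j) (η i j ω) : ℝ)| ≤ ζ1 ω * ‖θ i - θ' j‖ := hζ1le i j hbad
    have hip : -(ζ1 ω * ‖θ i - θ' j‖) ≤ (inner ℝ (θ i - θ' j) (η i j ω) : ℝ) := neg_le_of_abs_le h2
    have hfac2 : 0 ≤ ‖θ i - θ' j‖ + σ0 * κbar - 2 * σ0 * ζ1 ω := by
      nlinarith [mul_nonneg hσ0.le (show 0 ≤ κbar - 2 * ζ1 ω by linarith)]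
    have key : 0 ≤ (‖θ i - θ' j‖ - σ0 * κbar) * (‖θ i - θ' j‖ + σ0 * κbar - 2 * σ0 * ζ1 ω) :=
      mul_nonneg (by linarith) hfac2
    have e3 : (σ^2+σ'^2) * ((d:ℝ) - Real.sqrt d * ζ2 ω) ≤ (σ^2+σ'^2) * ‖η i j ω‖^2 :=
      mul_le_mul_of_nonneg_left (hηlb i j) hs0.le
    have e1 : 2 * σ0 * (-(ζ1 ω * ‖θ i - θ' j‖)) ≤ 2 * σ0 * (inner ℝ (θ i - θ' j) (η i j ω) : ℝ) :=
      mul_le_mul_of_nonneg_left hip (by positivity)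
    rw [hAdef]
    nlinarith [key, e1, e3, hσ0sq, hσ0.le]
  -- nonemptiness and finiteness of the matching value sets
  have hTfin : ∀ k, {r : ℝ | ∃ (S : Finset (Fin n)) (π : Fin n → Fin m),
      S.card = k ∧ Set.InjOn π ↑S ∧ r = ∑ i ∈ S, ‖X i ω - X' (π i) ω‖^2}.Finite := by
    intro k
    apply finite_of_range (fun p : Finset (Fin n) × (Fin n → Fin m) =>
      ∑ i ∈ p.1, ‖X i ω - X' (p.2 i) ω‖^2)
    rintro r ⟨S, π, _, _, rfl⟩; exact ⟨(S, π), rfl⟩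
  have hTne : ∀ k, k ≤ n → {r : ℝ | ∃ (S : Finset (Fin n)) (π : Fin n → Fin m),
      S.card = k ∧ Set.InjOn π ↑S ∧ r = ∑ i ∈ S, ‖X i ω - X' (π i) ω‖^2}.Nonempty := by
    intro k hkn
    obtain ⟨S, -, hScard⟩ := Finset.exists_subset_card_eq
      (show k ≤ (Finset.univ : Finset (Fin n)).card by simpa using hkn)
    exact ⟨_, S, fun i => Fin.castLE hnm i, hScard, (Fin.castLE_injective hnm).injOn, rfl⟩
  -- upper bound on Φhat kstar
  have hΦub : Φhat kstar ω ≤ (kstar:ℝ) * ((σ^2+σ'^2) * B) := by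
    rw [hΦhat]
    refine le_trans (csInf_le (hTfin kstar).bddBelow ⟨Sstar, πstar, hkstar, hπstar, rfl⟩) ?_
    have hterm : ∀ i ∈ Sstar, ‖X i ω - X' (πstar i) ω‖^2 ≤ (σ^2+σ'^2) * B := by
      intro i hi
      rw [hnormsq, hmatch i hi]
      simp only [sub_self, norm_zero, inner_zero_left]
      rw [hBdef]
      nlinarith [mul_le_mul_of_nonneg_left (hηub i (πstar i)) hs0.le]
    calc ∑ i ∈ Sstar, ‖X i ω - X' (πstar i) ω‖^2
        ≤ ∑ _i ∈ Sstar, (σ^2+σ'^2) * B := Finset.sum_le_sum hterm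
      _ = (kstar:ℝ) * ((σ^2+σ'^2) * B) := by
          rw [Finset.sum_const, hkstar, nsmul_eq_mul]
  -- the increment bound
  have hkn : kstar + 1 ≤ n := le_trans hk (min_le_left _ _)
  have hinc : Φhat kstar ω + (σ^2+σ'^2) * A ≤ Φhat (kstar+1) ω := by
    rw [hΦhat (kstar+1)]
    refine le_csInf (hTne _ hkn) ?_
    rintro r ⟨S, π, hScard, hSinj, rfl⟩
    have hex : ∃ i ∈ S, ¬(i ∈ Sstar ∧ π i = πstar i) := by
      by_contra h
      push_neg at h
      have hsub : S ⊆ Sstar := fun i hi => (h i hi).1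
      have := Finset.card_le_card hsub
      omega
    obtain ⟨a, haS, habad⟩ := hex
    have hsplit : ‖X a ω - X' (π a) ω‖^2 + ∑ i ∈ S.erase a, ‖X i ω - X' (π i) ω‖^2
        = ∑ i ∈ S, ‖X i ω - X' (π i) ω‖^2 :=
      Finset.add_sum_erase S (fun i => ‖X i ω - X' (π i) ω‖^2) haS
    have hrest : Φhat kstar ω ≤ ∑ i ∈ S.erase a, ‖X i ω - X' (π i) ω‖^2 := by
      rw [hΦhat]
      exact csInf_le (hTfin kstar).bddBelow
        ⟨S.erase a, π, by rw [Finset.card_erase_of_mem haS, hScard]; omega,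
          hSinj.mono (Finset.coe_subset.mpr (Finset.erase_subset _ _)), rfl⟩
    have hb := hbadlb a (π a) habad
    linarith
  -- conclusion
  have hRHS : Φhat kstar ω * A / ((kstar:ℝ) * B) ≤ (σ^2+σ'^2) * A := by
    rcases Nat.eq_zero_or_pos kstar with h0 | hpos
    · rw [h0]
      simp only [Nat.cast_zero, zero_mul, div_zero]
      exact mul_nonneg hs0.le hApos
    · have hkpos : (0:ℝ) < (kstar:ℝ) := by exact_mod_cast hpos
      have hkB : 0 < (kstar:ℝ) * B := mul_pos hkpos hBpos
      rw [div_le_iff₀ hkB]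
      have h := mul_le_mul_of_nonneg_right hΦub hApos
      nlinarith
  linarith
end
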